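/- arXiv:quant-ph/0502001 — 9 statements merged into one kernel-verified Lean document; each statement's English description precedes it below -/
import Mathlib

section
/- For a prime power q, an integer m ≥ 1, and 0 ≤ ν ≤ m(q-1)-1, the Euclidean dual of the generalized Reed–Muller code R_q(ν,m) is again a generalized Reed–Muller code: R_q(ν,m)^⊥ = R_q(ν^⊥, m), where ν^⊥ = m(q-1)-1-ν. -/
/-- The linear map sending a multivariate polynomial to its evaluation vector. -/
noncomputable def evalVec (F : Type*) [CommSemiring F] (m : ℕ) :
    MvPolynomial (Fin m) F →ₗ[F] ((Fin m → F) → F) where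
  toFun f := fun P => MvPolynomial.eval P f
  map_add' f g := by funext P; simp
  map_smul' c f := by funext P; simp

/-- The generalized Reed–Muller code `R_F(ν, m)`. -/
noncomputable def GRM (F : Type*) [Field F] (ν m : ℕ) : Submodule F ((Fin m → F) → F) :=
  (MvPolynomial.restrictTotalDegree (Fin m) F ν).map (evalVec F m)

/-- Hamming weight. -/
noncomputable def wt {ι F : Type*} [Fintype ι] [Zero F] (v : ι → F) : ℕ :=
  Nat.card {i // v i ≠ 0}

/-- Euclidean dual of a set of vectors. -/
def dualSet {F ι : Type*} [CommRing F] [Fintype ι] (S : Set (ι → F)) : Set (ι → F) :=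
  { x | ∀ y ∈ S, ∑ i, x i * y i = 0 }


open MvPolynomial Module Finset

namespace GRMdual

/-- reduce an exponent modulo the relation `x^q = x` (for `x ≠ 0`, modulo `x^(q-1) = 1`). -/
def redE (q n : ℕ) : ℕ := if n = 0 then 0 else (n - 1) % (q - 1) + 1

lemma redE_le_self (q n : ℕ) : redE q n ≤ n := by
  unfold redE; split
  · omega
  · have := Nat.mod_le (n - 1) (q - 1); omega

lemma redE_le (q n : ℕ) (hq : 2 ≤ q) : redE q n ≤ q - 1 := by
  unfold redE; split
  · omega
  · have := Nat.mod_lt (n - 1) (y := q - 1) (by omega); omega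

variable {F : Type*} [Field F] [Fintype F] {m : ℕ}

lemma pow_redE (c : F) (n : ℕ) : c ^ n = c ^ redE (Fintype.card F) n := by
  have hq : 1 < Fintype.card F := Fintype.one_lt_card
  unfold redE
  split
  · rename_i h; subst h; rfl
  · rename_i h
    rcases eq_or_ne c 0 with rfl | hc
    · rw [zero_pow h, zero_pow (by omega)]
    · have h1 : c ^ (Fintype.card F - 1) = 1 := FiniteField.pow_card_sub_one_eq_one c hc
      have hn : n = (Fintype.card F - 1) * ((n - 1) / (Fintype.card F - 1))
          + ((n - 1) % (Fintype.card F - 1) + 1) := by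
        have := Nat.div_add_mod (n - 1) (Fintype.card F - 1)
        omega
      conv_lhs => rw [hn]
      rw [pow_add, pow_mul, h1, one_pow, one_mul]

lemma sum_prod_pow_eq_zero (a : Fin m →₀ ℕ)
    (ha : (a.sum fun _ e => e) < m * (Fintype.card F - 1)) :
    ∑ P : Fin m → F, ∏ i, P i ^ a i = 0 := by
  classical
  have hsum : (a.sum fun _ e => e) = ∑ i, a i := Finsupp.sum_fintype _ _ fun _ => rfl
  obtain ⟨i0, hi0⟩ : ∃ i, a i < Fintype.card F - 1 := by
    by_contra h; push_neg at h
    have : m * (Fintype.card F - 1) ≤ ∑ i, a i := by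
      calc m * (Fintype.card F - 1) = ∑ _i : Fin m, (Fintype.card F - 1) := by
            simp [mul_comm]
        _ ≤ ∑ i, a i := Finset.sum_le_sum fun i _ => h i
    omega
  rw [← Fintype.prod_sum (fun i (c : F) => c ^ a i)]
  exact Finset.prod_eq_zero (Finset.mem_univ i0)
    (FiniteField.sum_pow_lt_card_sub_one F _ hi0)

lemma sum_eval_eq_zero (h : MvPolynomial (Fin m) F)
    (hd : h.totalDegree < m * (Fintype.card F - 1)) :
    ∑ P : Fin m → F, MvPolynomial.eval P h = 0 := by
  classical
  simp_rw [eval_eq']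
  rw [Finset.sum_comm]
  refine Finset.sum_eq_zero fun a ha => ?_
  rw [← Finset.mul_sum, sum_prod_pow_eq_zero a (lt_of_le_of_lt (le_totalDegree ha) hd),
    mul_zero]

section dot

variable (F m)

/-- The dot product bilinear form on `(Fin m → F) → F`. -/
noncomputable def dotB : LinearMap.BilinForm F ((Fin m → F) → F) :=
  LinearMap.mk₂ F (fun x y => ∑ P, x P * y P)
    (fun x x' y => by simp [add_mul, Finset.sum_add_distrib])
    (fun c x y => by simp [Finset.mul_sum, mul_assoc])
    (fun x y y' => by simp [mul_add, Finset.sum_add_distrib])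
    (fun c x y => by simp [Finset.mul_sum, mul_left_comm])

lemma dotB_apply (x y : (Fin m → F) → F) : dotB F m x y = ∑ P, x P * y P := rfl

lemma dotB_nondeg : (dotB F m).Nondegenerate := by
  classical
  refine ⟨fun x hx => ?_, fun x hx => ?_⟩
  all_goals
    funext P
    have := hx (Pi.single P 1)
    simpa [dotB_apply, Pi.single_apply, mul_ite, ite_mul] using this

lemma dotB_refl : (dotB F m).IsRefl := fun x y h => by
  simpa [dotB_apply, mul_comm] using h

lemma dualSet_eq (N : Submodule F ((Fin m → F) → F)) :
    dualSet (N : Set ((Fin m → F) → F))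
      = ((dotB F m).orthogonal N : Set ((Fin m → F) → F)) := by
  ext x
  simp only [dualSet, Set.mem_setOf_eq, SetLike.mem_coe,
    LinearMap.BilinForm.mem_orthogonal_iff]
  refine forall₂_congr fun y hy => ?_
  simp [LinearMap.BilinForm.IsOrtho, dotB_apply, mul_comm]

end dot

variable (F m) in
/-- Exponents of the reduced monomials of degree at most `ν`. -/
def Sset (ν : ℕ) : Set (Fin m →₀ ℕ) :=
  {a | (a.sum fun _ e => e) ≤ ν ∧ ∀ i, a i ≤ Fintype.card F - 1}

omit [Fintype F] in
lemma evalVec_apply (f : MvPolynomial (Fin m) F) (P : Fin m → F) :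
    evalVec F m f P = eval P f := rfl

variable (F m) in
noncomputable def red (a : Fin m →₀ ℕ) : Fin m →₀ ℕ :=
  a.mapRange (redE (Fintype.card F)) (by simp [redE])

lemma evalVec_monomial_red (a : Fin m →₀ ℕ) (c : F) :
    evalVec F m (monomial a c) = evalVec F m (monomial (red F m a) c) := by
  funext P
  rw [evalVec_apply, evalVec_apply, eval_monomial, eval_monomial]
  congr 1
  rw [Finsupp.prod_fintype _ _ (fun i => pow_zero _),
    Finsupp.prod_fintype _ _ (fun i => pow_zero _)]
  exact Finset.prod_congr rfl fun i _ => by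
    rw [red, Finsupp.mapRange_apply, ← pow_redE]

lemma red_mem_Sset {ν : ℕ} {a : Fin m →₀ ℕ} (ha : (a.sum fun _ e => e) ≤ ν) :
    red F m a ∈ Sset F m ν := by
  have hq : 1 < Fintype.card F := Fintype.one_lt_card
  constructor
  · rw [Finsupp.sum_fintype _ _ fun _ => rfl] at ha ⊢
    refine le_trans (Finset.sum_le_sum fun i _ => ?_) ha
    rw [red, Finsupp.mapRange_apply]
    exact redE_le_self _ _
  · intro i
    rw [red, Finsupp.mapRange_apply]
    exact redE_le _ _ hq

lemma grm_eq (ν : ℕ) :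
    GRM F ν m = (restrictSupport F (Sset F m ν)).map (evalVec F m) := by
  classical
  apply le_antisymm
  · rintro x hx
    obtain ⟨f, hf, rfl⟩ := Submodule.mem_map.mp hx
    rw [mem_restrictTotalDegree] at hf
    have hrw : evalVec F m f
        = ∑ a ∈ f.support, evalVec F m (monomial (red F m a) (coeff a f)) := by
      conv_lhs => rw [f.as_sum]
      rw [map_sum]
      exact Finset.sum_congr rfl fun a _ => evalVec_monomial_red a _
    rw [hrw]
    refine Submodule.sum_mem _ fun a ha => Submodule.mem_map_of_mem ?_
    have hmem : red F m a ∈ Sset F m ν :=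
      red_mem_Sset (le_trans (le_totalDegree ha) hf)
    show _ ∈ restrictSupport F (Sset F m ν)
    rw [restrictSupport, AddMonoidAlgebra.mem_supported]
    intro b hb
    have hb' : b = red F m a := by
      have := MvPolynomial.support_monomial_subset (Finset.mem_coe.mp hb)
      simpa using this
    rw [hb']; exact hmem
  · exact Submodule.map_mono (restrictSupport_mono (R := F) fun a ha => ha.1)

variable (F m) in
noncomputable def ssetEquiv (ν : ℕ) :
    ↥(Sset F m ν) ≃ {b : Fin m → Fin (Fintype.card F) // ∑ i, (b i : ℕ) ≤ ν} where
  toFun a := ⟨fun i => ⟨a.1 i, by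
      have := a.2.2 i
      have hq : 1 < Fintype.card F := Fintype.one_lt_card
      omega⟩, by
    have := a.2.1
    rwa [Finsupp.sum_fintype _ _ fun _ => rfl] at this⟩
  invFun b := ⟨Finsupp.equivFunOnFinite.symm (fun i => (b.1 i : ℕ)), by
    constructor
    · rw [Finsupp.sum_fintype _ _ fun _ => rfl]
      simpa using b.2
    · intro i
      have := (b.1 i).isLt
      simp only [Finsupp.coe_equivFunOnFinite_symm]
      omega⟩
  left_inv a := by
    apply Subtype.ext
    ext i
    simp
  right_inv b := by
    apply Subtype.ext
    funext i
    apply Fin.ext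
    simp

universe uF in
lemma eval_eq_zero_of_restrictDegree {F : Type uF} [Field F] [Fintype F] {m : ℕ}
    (p : MvPolynomial (Fin m) F) (h : ∀ v : Fin m → F, MvPolynomial.eval v p = 0)
    (hp : p ∈ restrictDegree (Fin m) F (Fintype.card F - 1)) : p = 0 := by
  classical
  let e : Fin m ≃ ULift.{uF} (Fin m) := Equiv.ulift.symm
  have hinj : Function.Injective (e : Fin m → ULift.{uF} (Fin m)) := e.injective
  have h1 : ∀ v : ULift.{uF} (Fin m) → F,
      MvPolynomial.eval v (rename (e : Fin m → ULift.{uF} (Fin m)) p) = 0 := by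
    intro v; rw [eval_rename]; exact h _
  have h2 : rename (e : Fin m → ULift.{uF} (Fin m)) p
      ∈ restrictDegree (ULift.{uF} (Fin m)) F (Fintype.card F - 1) := by
    rw [mem_restrictDegree] at hp ⊢
    intro s hs i
    rw [support_rename_of_injective hinj, Finset.mem_image] at hs
    obtain ⟨a, ha, rfl⟩ := hs
    obtain ⟨j, rfl⟩ := e.surjective i
    rw [Finsupp.mapDomain_apply hinj]
    exact hp a ha j
  have h0 := MvPolynomial.eq_zero_of_eval_eq_zero (ULift.{uF} (Fin m)) F _ h1 h2
  exact (rename_injective _ hinj) (by rwa [map_zero])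

lemma finrank_grm (ν : ℕ) :
    finrank F (GRM F ν m)
      = Fintype.card {b : Fin m → Fin (Fintype.card F) // ∑ i, (b i : ℕ) ≤ ν} := by
  classical
  haveI : Fintype ↥(Sset F m ν) := Fintype.ofEquiv _ (ssetEquiv F m ν).symm
  set Q := restrictSupport F (Sset F m ν) with hQ
  haveI : Module.Finite F Q :=
    Module.Finite.of_basis (basisRestrictSupport F (Sset F m ν))
  have hQle : Q ≤ restrictDegree (Fin m) F (Fintype.card F - 1) :=
    restrictSupport_mono (R := F) fun a ha => ha.2
  set L := (evalVec F m).comp Q.subtype with hL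
  have hrange : LinearMap.range L = GRM F ν m := by
    rw [hL, LinearMap.range_comp, Submodule.range_subtype, ← grm_eq]
  have hker : LinearMap.ker L = ⊥ := by
    rw [LinearMap.ker_eq_bot']
    rintro ⟨f, hf⟩ hLf
    apply Subtype.ext
    exact eval_eq_zero_of_restrictDegree f (fun v => congrFun hLf v) (hQle hf)
  have h1 := LinearMap.finrank_range_add_finrank_ker L
  rw [hrange, hker, finrank_bot, add_zero] at h1
  rw [h1, hQ, finrank_eq_card_basis (basisRestrictSupport F (Sset F m ν))]
  exact Fintype.card_congr (ssetEquiv F m ν)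

lemma card_add_card {m : ℕ} (q : ℕ) (hq : 1 < q) {ν ν' : ℕ}
    (h : ν + ν' + 1 = m * (q - 1)) :
    Fintype.card {b : Fin m → Fin q // ∑ i, (b i : ℕ) ≤ ν}
      + Fintype.card {b : Fin m → Fin q // ∑ i, (b i : ℕ) ≤ ν'} = q ^ m := by
  classical
  rw [Fintype.card_subtype, Fintype.card_subtype]
  have key : ∀ b : Fin m → Fin q,
      (∑ i, ((Fin.rev (b i)) : ℕ)) + ∑ i, (b i : ℕ) = m * (q - 1) := by
    intro b
    rw [← Finset.sum_add_distrib]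
    have h1 : ∀ i : Fin m, ((Fin.rev (b i) : ℕ)) + (b i : ℕ) = q - 1 := fun i => by
      have := (b i).isLt; rw [Fin.val_rev]; omega
    rw [Finset.sum_congr rfl fun i _ => h1 i]
    simp [mul_comm]
  have hbij : (Finset.univ.filter fun b : Fin m → Fin q => ∑ i, (b i : ℕ) ≤ ν').card
      = (Finset.univ.filter fun b : Fin m → Fin q => ¬ (∑ i, (b i : ℕ) ≤ ν)).card := by
    refine Finset.card_bij' (fun b _ => fun i => Fin.rev (b i))
      (fun b _ => fun i => Fin.rev (b i)) ?_ ?_ ?_ ?_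
    · intro b hb
      simp only [Finset.mem_filter, Finset.mem_univ, true_and] at hb ⊢
      have := key b
      omega
    · intro b hb
      simp only [Finset.mem_filter, Finset.mem_univ, true_and] at hb ⊢
      have := key b
      omega
    · intro b _; funext i; simp
    · intro b _; funext i; simp
  rw [hbij, Finset.card_filter_add_card_filter_not]
  simp [Finset.card_univ]

end GRMdual

/-- For a prime power `q` (the cardinality of the finite field `F`), `m ≥ 1`,
and `0 ≤ ν ≤ m(q-1)-1`, the Euclidean dual of `R_q(ν,m)` is `R_q(m(q-1)-1-ν, m)`. -/
theorem grm_dual (F : Type*) [Field F] [Fintype F] (m ν : ℕ)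
    (hm : 1 ≤ m) (hν : ν ≤ m * (Fintype.card F - 1) - 1) :
    dualSet (GRM F ν m : Set ((Fin m → F) → F)) =
      (GRM F (m * (Fintype.card F - 1) - 1 - ν) m : Set ((Fin m → F) → F)) := by
  classical
  have hq : 1 < Fintype.card F := Fintype.one_lt_card
  set q := Fintype.card F with hqdef
  set ν' := m * (q - 1) - 1 - ν with hν'
  have hD1 : 0 < m * (q - 1) := Nat.mul_pos hm (by omega)
  have hsum : ν + ν' + 1 = m * (q - 1) := by omega
  have hle : GRM F ν' m ≤ (GRMdual.dotB F m).orthogonal (GRM F ν m) := by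
    rintro x hx
    obtain ⟨g, hg, rfl⟩ := Submodule.mem_map.mp hx
    rw [LinearMap.BilinForm.mem_orthogonal_iff]
    rintro y hy
    obtain ⟨f, hf, rfl⟩ := Submodule.mem_map.mp hy
    show GRMdual.dotB F m (evalVec F m f) (evalVec F m g) = 0
    rw [GRMdual.dotB_apply]
    have hmul : ∀ P : Fin m → F,
        evalVec F m f P * evalVec F m g P = MvPolynomial.eval P (f * g) := fun P => by
      rw [GRMdual.evalVec_apply, GRMdual.evalVec_apply, map_mul]
    rw [Finset.sum_congr rfl fun P _ => hmul P]
    apply GRMdual.sum_eval_eq_zero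
    rw [MvPolynomial.mem_restrictTotalDegree] at hf hg
    calc (f * g).totalDegree ≤ f.totalDegree + g.totalDegree :=
          MvPolynomial.totalDegree_mul f g
      _ ≤ ν + ν' := add_le_add hf hg
      _ < m * (q - 1) := by omega
  have horth : GRM F ν' m = (GRMdual.dotB F m).orthogonal (GRM F ν m) := by
    refine Submodule.eq_of_le_of_finrank_le hle ?_
    rw [LinearMap.BilinForm.finrank_orthogonal (GRMdual.dotB_nondeg F m), GRMdual.finrank_grm, GRMdual.finrank_grm]
    have hcard := GRMdual.card_add_card (m := m) q hq hsum
    have htop : Module.finrank F ((Fin m → F) → F) = q ^ m := by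
      rw [Module.finrank_fintype_fun_eq_card, Fintype.card_fun, Fintype.card_fin]
    rw [htop, ← hcard, Nat.add_sub_cancel_left]
  rw [GRMdual.dualSet_eq, ← horth]
end

section
/- For a prime power q, an integer m ≥ 1, and 0 ≤ ν ≤ m(q-1), the dimension of the generalized Reed–Muller code R_q(ν,m) over F_q equals Σ_{j=0}^{m} (-1)^j · C(m,j) · C(m+ν-jq, ν-jq), where C(a,b) denotes the binomial coefficient, taken to be 0 whenever b < 0. -/
lemma filter_sum_le_mem {m t t' : ℕ} (h : t' ≤ t) (a : Fin m → ℕ) :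
    a ∈ (Fintype.piFinset fun _ : Fin m => Finset.range (t+1)).filter
      (fun a => ∑ i, a i ≤ t') ↔ ∑ i, a i ≤ t' := by
  simp only [Finset.mem_filter, Fintype.mem_piFinset, Finset.mem_range, Nat.lt_succ_iff]
  refine ⟨fun h => h.2, fun hs => ⟨fun i => ?_, hs⟩⟩
  exact le_trans (le_trans (Finset.single_le_sum (f := a)
    (fun i _ => Nat.zero_le _) (Finset.mem_univ i)) hs) h

lemma count_sum_le (m t : ℕ) :
    ((Fintype.piFinset fun _ : Fin m => Finset.range (t+1)).filter
      (fun a => ∑ i, a i ≤ t)).card = (m + t).choose t := by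
  induction m generalizing t with
  | zero => simp
  | succ m ih =>
    have e1 : m + t + 1 - m = t + 1 := by omega
    have key : ((Fintype.piFinset fun _ : Fin (m+1) => Finset.range (t+1)).filter
        (fun a => ∑ i, a i ≤ t)).card
        = ((Finset.range (t+1)).sigma fun k =>
            (Fintype.piFinset fun _ : Fin m => Finset.range ((t-k)+1)).filter
              (fun a => ∑ i, a i ≤ t - k)).card := by
      refine Finset.card_bij' (fun a _ => ⟨a 0, Fin.tail a⟩)
        (fun p _ => Fin.cons p.1 p.2) ?_ ?_ ?_ ?_
      · intro a ha
        rw [filter_sum_le_mem le_rfl] at ha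
        have h0 : a 0 ≤ t := le_trans (Finset.single_le_sum (f := a)
          (fun i _ => Nat.zero_le _) (Finset.mem_univ 0)) ha
        rw [Fin.sum_univ_succ] at ha
        simp only [Finset.mem_sigma, Finset.mem_range, Nat.lt_succ_iff]
        refine ⟨h0, (filter_sum_le_mem le_rfl _).2 ?_⟩
        have : ∑ i : Fin m, Fin.tail a i = ∑ i : Fin m, a i.succ := rfl
        omega
      · intro p hp
        simp only [Finset.mem_sigma, Finset.mem_range, Nat.lt_succ_iff,
          filter_sum_le_mem le_rfl] at hp
        rw [filter_sum_le_mem le_rfl, Fin.sum_univ_succ]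
        simp only [Fin.cons_zero, Fin.cons_succ]
        omega
      · intro a _; exact Fin.cons_self_tail a
      · intro p _
        simp only [Fin.cons_zero, Fin.tail_cons]
    rw [key, Finset.card_sigma]
    have step : ∀ k ∈ Finset.range (t+1),
        ((Fintype.piFinset fun _ : Fin m => Finset.range ((t-k)+1)).filter
          (fun a => ∑ i, a i ≤ t - k)).card = (m + (t - k)).choose (t - k) :=
      fun k _ => ih (t - k)
    rw [Finset.sum_congr rfl step]
    have reflect : ∑ k ∈ Finset.range (t+1), (m + (t - k)).choose (t - k)
        = ∑ s ∈ Finset.range (t+1), (m + s).choose s := by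
      have := Finset.sum_range_reflect (fun s => (m + s).choose s) (t+1)
      simpa using this
    rw [reflect]
    have symm1 : ∀ s ∈ Finset.range (t+1), (m + s).choose s = (m + s).choose m := by
      intro s _; exact Nat.choose_symm_add.symm
    rw [Finset.sum_congr rfl symm1]
    have : ∑ s ∈ Finset.range (t+1), (m + s).choose m
        = ∑ i ∈ Finset.Ico m (m + t + 1), i.choose m := by
      rw [Finset.sum_Ico_eq_sum_range]
      simp only [e1]
    rw [this]
    rw [Finset.Ico_add_one_right_eq_Icc]
    rw [Nat.sum_Icc_choose]
    rw [Nat.add_right_comm m t 1]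
    exact Nat.choose_symm_add

lemma cntS_card {m ν q : ℕ} (S : Finset (Fin m)) :
    (((Fintype.piFinset fun _ : Fin m => Finset.range (ν+1)).filter
        (fun a => ∑ i, a i ≤ ν)).filter (fun a => ∀ i ∈ S, q ≤ a i)).card
      = if q * S.card ≤ ν then (m + (ν - q * S.card)).choose (ν - q * S.card) else 0 := by
  have memB : ∀ b : Fin m → ℕ,
      b ∈ ((Fintype.piFinset fun _ : Fin m => Finset.range (ν+1)).filter
        (fun a => ∑ i, a i ≤ ν)).filter (fun a => ∀ i ∈ S, q ≤ a i)
      ↔ ((∑ i, b i ≤ ν) ∧ ∀ i ∈ S, q ≤ b i) := by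
    intro b
    simp only [Finset.mem_filter, Fintype.mem_piFinset, Finset.mem_range, Nat.lt_succ_iff]
    constructor
    · rintro ⟨⟨-, h2⟩, h3⟩; exact ⟨h2, h3⟩
    · rintro ⟨h2, h3⟩
      exact ⟨⟨fun i => le_trans (Finset.single_le_sum (f := b)
        (fun i _ => Nat.zero_le _) (Finset.mem_univ i)) h2, h2⟩, h3⟩
  have hsum : ∀ b : Fin m → ℕ, (∑ i, (if i ∈ S then q else 0)) = q * S.card := by
    intro _
    rw [Finset.sum_ite_mem, Finset.univ_inter, Finset.sum_const, smul_eq_mul, mul_comm]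
  split_ifs with hq
  · rw [← count_sum_le m (ν - q * S.card)]
    refine (Finset.card_bij' (fun b _ => fun i => b i - if i ∈ S then q else 0)
      (fun a _ => fun i => a i + if i ∈ S then q else 0) ?_ ?_ ?_ ?_)
    · intro b hb
      rw [memB] at hb
      rw [filter_sum_le_mem le_rfl]
      have hle : ∀ i ∈ Finset.univ, (if i ∈ S then q else 0) ≤ b i := by
        intro i _
        split_ifs with h
        · exact hb.2 i h
        · exact Nat.zero_le _
      show ∑ i, (b i - if i ∈ S then q else 0) ≤ ν - q * S.card
      rw [Finset.sum_tsub_distrib _ hle, hsum b]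
      exact Nat.sub_le_sub_right hb.1 _
    · intro a ha
      rw [filter_sum_le_mem le_rfl] at ha
      rw [memB]
      show (∑ i, (a i + if i ∈ S then q else 0) ≤ ν) ∧ _
      constructor
      · have : ∑ i, (a i + if i ∈ S then q else 0)
            = (∑ i, a i) + ∑ i, (if i ∈ S then q else 0) := Finset.sum_add_distrib
        rw [this, hsum a]
        omega
      · intro i hi
        simp [hi]
    · intro b hb
      rw [memB] at hb
      funext i
      have := hb.2 i
      show (b i - if i ∈ S then q else 0) + (if i ∈ S then q else 0) = b i
      split_ifs with h
      · have h2 := this h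
        omega
      · simp
    · intro a _
      funext i
      show (a i + if i ∈ S then q else 0) - (if i ∈ S then q else 0) = a i
      split_ifs <;> simp
  · rw [Finset.card_eq_zero, Finset.filter_eq_empty_iff]
    intro b hb
    simp only [Finset.mem_filter, Fintype.mem_piFinset] at hb
    intro hall
    have h1 : q * S.card = ∑ i ∈ S, q := by
      rw [Finset.sum_const, smul_eq_mul, mul_comm]
    have h2 : ∑ i ∈ S, q ≤ ∑ i ∈ S, b i := Finset.sum_le_sum hall
    have h3 : ∑ i ∈ S, b i ≤ ∑ i, b i :=
      Finset.sum_le_sum_of_subset (Finset.subset_univ S)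
    omega

lemma IE_count {m ν q : ℕ} (hq : 1 ≤ q) :
    (((Fintype.piFinset fun _ : Fin m => Finset.range (ν+1)).filter
        (fun a => (∑ i, a i ≤ ν) ∧ ∀ i, a i ≤ q - 1)).card : ℤ)
      = ∑ j ∈ Finset.range (m + 1), (-1 : ℤ) ^ j * (m.choose j : ℤ) *
          (if j * q ≤ ν then ((m + ν - j * q).choose (ν - j * q) : ℤ) else 0) := by
  classical
  have hiff : ∀ x : ℕ, (x ≤ q - 1) ↔ ¬ q ≤ x := fun x => by omega
  set Ω := (Fintype.piFinset fun _ : Fin m => Finset.range (ν+1)) with hΩ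
  set B := Ω.filter (fun a => ∑ i, a i ≤ ν) with hB
  have hsplit : (Ω.filter (fun a => (∑ i, a i ≤ ν) ∧ ∀ i, a i ≤ q - 1))
      = B.filter (fun a => ∀ i, a i ≤ q - 1) := by
    rw [hB, Finset.filter_filter]
  rw [hsplit]
  -- express card as a sum of indicators
  have step1 : ((B.filter (fun a => ∀ i, a i ≤ q - 1)).card : ℤ)
      = ∑ a ∈ B, (if ∀ i, a i ≤ q - 1 then (1 : ℤ) else 0) := by
    rw [Finset.sum_boole]
  rw [step1]
  -- per-element inclusion-exclusion
  have step2 : ∀ a ∈ B, (if ∀ i, a i ≤ q - 1 then (1 : ℤ) else 0)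
      = ∑ S ∈ (Finset.univ : Finset (Fin m)).powerset,
          (-1 : ℤ) ^ S.card * (if ∀ i ∈ S, q ≤ a i then 1 else 0) := by
    intro a _
    have h1 : ∑ S ∈ (Finset.univ : Finset (Fin m)).powerset,
        (-1 : ℤ) ^ S.card * (if ∀ i ∈ S, q ≤ a i then 1 else 0)
        = ∑ S ∈ (Finset.univ : Finset (Fin m)).powerset.filter
            (fun S => ∀ i ∈ S, q ≤ a i), (-1 : ℤ) ^ S.card := by
      rw [Finset.sum_filter]
      refine Finset.sum_congr rfl fun S _ => ?_
      split_ifs <;> simp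
    have h2 : (Finset.univ : Finset (Fin m)).powerset.filter
        (fun S => ∀ i ∈ S, q ≤ a i) = (Finset.univ.filter fun i => q ≤ a i).powerset := by
      ext S
      simp only [Finset.mem_filter, Finset.mem_powerset, Finset.subset_univ, true_and,
        Finset.subset_iff, Finset.mem_filter, Finset.mem_univ]
      tauto
    rw [h1, h2, Finset.sum_powerset_neg_one_pow_card]
    congr 1
    rw [eq_iff_iff, Finset.filter_eq_empty_iff]
    constructor
    · intro h i _
      exact (hiff _).1 (h i)
    · intro h i
      exact (hiff _).2 (@h i (Finset.mem_univ i))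
  rw [Finset.sum_congr rfl step2, Finset.sum_comm]
  have step3 : ∀ S ∈ (Finset.univ : Finset (Fin m)).powerset,
      (∑ a ∈ B, (-1 : ℤ) ^ S.card * (if ∀ i ∈ S, q ≤ a i then 1 else 0))
      = (-1 : ℤ) ^ S.card * (if q * S.card ≤ ν then
          ((m + (ν - q * S.card)).choose (ν - q * S.card) : ℤ) else 0) := by
    intro S _
    rw [← Finset.mul_sum]
    congr 1
    rw [Finset.sum_boole, cntS_card]
    split_ifs <;> simp
  rw [Finset.sum_congr rfl step3]
  have step4 := Finset.sum_powerset_apply_card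
    (f := fun j => (-1 : ℤ) ^ j * (if q * j ≤ ν then
      ((m + (ν - q * j)).choose (ν - q * j) : ℤ) else 0)) (x := (Finset.univ : Finset (Fin m)))
  rw [step4, Finset.card_univ, Fintype.card_fin]
  refine Finset.sum_congr rfl fun j _ => ?_
  rw [nsmul_eq_mul, mul_comm q j]
  rcases le_or_gt (j * q) ν with h | h
  · rw [if_pos h, if_pos h, Nat.add_sub_assoc h]
    ring
  · rw [if_neg (not_le.2 h), if_neg (not_le.2 h)]
    ring

/-- exponent reduction: `x^e = x^(redExp q e)` in `F_q`. -/
def redExp (q e : ℕ) : ℕ := if e = 0 then 0 else (e - 1) % (q - 1) + 1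

lemma redExp_le (q e : ℕ) : redExp q e ≤ e := by
  unfold redExp
  split_ifs with h
  · omega
  · have := Nat.mod_le (e - 1) (q - 1)
    omega

lemma redExp_le_q (q e : ℕ) (hq : 2 ≤ q) : redExp q e ≤ q - 1 := by
  unfold redExp
  split_ifs with h
  · omega
  · have := Nat.mod_lt (e - 1) (y := q - 1) (by omega)
    omega

lemma redExp_zero (q : ℕ) : redExp q 0 = 0 := rfl

lemma pow_redExp {F : Type*} [Field F] [Fintype F] (x : F) (e : ℕ) :
    x ^ redExp (Fintype.card F) e = x ^ e := by
  set q := Fintype.card F with hq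
  rcases eq_or_ne e 0 with rfl | he
  · rfl
  rcases eq_or_ne x 0 with rfl | hx
  · have h1 : redExp q e ≠ 0 := by unfold redExp; simp [he]
    rw [zero_pow h1, zero_pow he]
  · have hq2 : 2 ≤ q := Fintype.one_lt_card
    have hdm := Nat.div_add_mod (e - 1) (q - 1)
    have he' : e = (q - 1) * ((e - 1) / (q - 1)) + redExp q e := by
      unfold redExp
      simp only [he, if_false]
      omega
    conv_rhs => rw [he']
    rw [pow_add, pow_mul, FiniteField.pow_card_sub_one_eq_one x hx, one_pow, one_mul]

lemma evalVec_monomial_redExp {F : Type*} [Field F] [Fintype F] {m : ℕ} (n : Fin m →₀ ℕ) :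
    evalVec F m (MvPolynomial.monomial
        (Finsupp.mapRange (redExp (Fintype.card F)) (redExp_zero _) n) 1)
      = evalVec F m (MvPolynomial.monomial n 1) := by
  funext P
  show MvPolynomial.eval P _ = MvPolynomial.eval P _
  rw [MvPolynomial.eval_monomial, MvPolynomial.eval_monomial]
  congr 1
  rw [Finsupp.prod_fintype _ _ (fun i => pow_zero (P i)),
    Finsupp.prod_fintype _ _ (fun i => pow_zero (P i))]
  refine Finset.prod_congr rfl fun i _ => ?_
  rw [Finsupp.mapRange_apply, pow_redExp]

open MvPolynomial in
/-- The set of exponents with all entries `≤ q - 1` is finite with cardinality `q ^ m`. -/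
lemma evalVec_injOn_restrictDegree (F : Type*) [Field F] [Fintype F] (m : ℕ) :
    ∀ p ∈ restrictDegree (Fin m) F (Fintype.card F - 1), evalVec F m p = 0 → p = 0 := by
  classical
  set q := Fintype.card F with hqdef
  have hq2 : 2 ≤ q := Fintype.one_lt_card
  set Sq : Set (Fin m →₀ ℕ) := {n : Fin m →₀ ℕ | ∀ i, n i ≤ q - 1} with hSq
  have hD : restrictDegree (Fin m) F (q - 1) = restrictSupport F Sq := rfl
  -- an equivalence computing the cardinality of Sq
  have e1 : Sq ≃ {a : Fin m → ℕ // ∀ i, a i ≤ q - 1} :=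
    (Finsupp.equivFunOnFinite (α := Fin m) (M := ℕ)).subtypeEquiv (fun n => Iff.rfl)
  have e2 : {a : Fin m → ℕ // ∀ i, a i ≤ q - 1} ≃ {a : Fin m → ℕ // ∀ i, a i < q} :=
    Equiv.subtypeEquivRight (fun a => forall_congr' fun i => by omega)
  have e3 : {a : Fin m → ℕ // ∀ i, a i < q} ≃ (Fin m → {x : ℕ // x < q}) :=
    Equiv.subtypePiEquivPi (p := fun (_ : Fin m) (x : ℕ) => x < q)
  have e4 : (Fin m → {x : ℕ // x < q}) ≃ (Fin m → Fin q) :=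
    Equiv.arrowCongr (Equiv.refl _) (Fin.equivSubtype).symm
  have eAll : Sq ≃ (Fin m → Fin q) := ((e1.trans e2).trans e3).trans e4
  haveI : Fintype Sq := Fintype.ofEquiv _ eAll.symm
  haveI : Module.Finite F (restrictSupport F Sq) :=
    Module.Finite.of_basis (basisRestrictSupport F Sq)
  have hcard : Fintype.card Sq = q ^ m := by
    rw [Fintype.card_congr eAll, Fintype.card_fun, Fintype.card_fin, Fintype.card_fin]
  set φD := (evalVec F m).comp (restrictSupport F Sq).subtype with hφD
  have hVeq : evalVec F m = MvPolynomial.evalₗ F (Fin m) := rfl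
  have hrange : LinearMap.range φD = ⊤ := by
    rw [hφD, LinearMap.range_comp, Submodule.range_subtype, hVeq, ← hD]
    exact map_restrict_dom_evalₗ F (Fin m)
  have hfr : Module.finrank F (restrictSupport F Sq)
      = Module.finrank F ((Fin m → F) → F) := by
    rw [Module.finrank_eq_card_basis (basisRestrictSupport F Sq), hcard,
      Module.finrank_fintype_fun_eq_card, Fintype.card_fun, Fintype.card_fin]
  have hker : LinearMap.ker φD = ⊥ :=
    (LinearMap.ker_eq_bot_iff_range_eq_top_of_finrank_eq_finrank hfr).2 hrange
  intro p hp hev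
  have hmem : p ∈ restrictSupport F Sq := hD ▸ hp
  have : (⟨p, hmem⟩ : restrictSupport F Sq) ∈ LinearMap.ker φD := by
    show φD ⟨p, hmem⟩ = 0
    show evalVec F m p = 0
    exact hev
  rw [hker, Submodule.mem_bot] at this
  exact congrArg Subtype.val this


open MvPolynomial in
lemma GRM_eq_map (F : Type*) [Field F] [Fintype F] (m ν : ℕ) :
    GRM F ν m = (restrictSupport F
        {n : Fin m →₀ ℕ | ((n.sum fun _ e => e) ≤ ν) ∧ ∀ i, n i ≤ Fintype.card F - 1}).map
      (evalVec F m) := by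
  set q := Fintype.card F with hqdef
  have hq2 : 2 ≤ q := Fintype.one_lt_card
  set A : Set (Fin m →₀ ℕ) :=
    {n : Fin m →₀ ℕ | ((n.sum fun _ e => e) ≤ ν) ∧ ∀ i, n i ≤ q - 1} with hA
  have le1 : restrictSupport F A ≤ restrictTotalDegree (Fin m) F ν :=
    restrictSupport_mono (R := F) (fun n hn => hn.1)
  refine le_antisymm ?_ (Submodule.map_mono le1)
  rw [GRM, restrictTotalDegree, restrictSupport, AddMonoidAlgebra.supported_eq_span_single,
    Submodule.map_span, Submodule.span_le]
  rintro v ⟨p, ⟨n, hn, rfl⟩, rfl⟩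
  have hred : (Finsupp.mapRange (redExp q) (redExp_zero _) n) ∈ A := by
    constructor
    · have h1 : ((Finsupp.mapRange (redExp q) (redExp_zero _) n).sum fun _ e => e)
          = ∑ i, redExp q (n i) := by
        rw [Finsupp.sum_fintype _ _ (fun i => rfl)]
        simp [Finsupp.mapRange_apply]
      have h2 : (n.sum fun _ e => e) = ∑ i, n i :=
        Finsupp.sum_fintype _ _ (fun i => rfl)
      rw [h1]
      calc ∑ i, redExp q (n i) ≤ ∑ i, n i :=
            Finset.sum_le_sum fun i _ => redExp_le q (n i)
        _ ≤ ν := by rw [← h2]; exact hn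
    · intro i
      rw [Finsupp.mapRange_apply]
      exact redExp_le_q q (n i) hq2
  have hmem : (monomial (Finsupp.mapRange (redExp q) (redExp_zero _) n) (1 : F))
      ∈ restrictSupport F A := Finsupp.single_mem_supported F 1 hred
  refine Submodule.mem_map.2 ⟨_, hmem, ?_⟩
  rw [show (monomial (Finsupp.mapRange (redExp q) (redExp_zero _) n) (1 : F))
    = MvPolynomial.monomial (Finsupp.mapRange (redExp q) (redExp_zero _) n) 1 from rfl]
  rw [evalVec_monomial_redExp]
  rfl

open MvPolynomial in
lemma grm_finrank_eq (F : Type*) [Field F] [Fintype F] (m ν : ℕ) :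
    Module.finrank F (GRM F ν m) =
      ((Fintype.piFinset fun _ : Fin m => Finset.range (ν+1)).filter
        (fun a => (∑ i, a i ≤ ν) ∧ ∀ i, a i ≤ Fintype.card F - 1)).card := by
  classical
  set q := Fintype.card F with hqdef
  set A : Set (Fin m →₀ ℕ) :=
    {n : Fin m →₀ ℕ | ((n.sum fun _ e => e) ≤ ν) ∧ ∀ i, n i ≤ q - 1} with hA
  set Fgood := (Fintype.piFinset fun _ : Fin m => Finset.range (ν+1)).filter
        (fun a => (∑ i, a i ≤ ν) ∧ ∀ i, a i ≤ q - 1) with hFgood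
  -- the equivalence between A and the Finset
  have hiff : ∀ n : Fin m →₀ ℕ, n ∈ A ↔ Finsupp.equivFunOnFinite n ∈ Fgood := by
    intro n
    have h2 : (n.sum fun _ e => e) = ∑ i, n i := Finsupp.sum_fintype _ _ (fun i => rfl)
    simp only [hA, Set.mem_setOf_eq, hFgood, Finset.mem_filter, Fintype.mem_piFinset,
      Finset.mem_range, Nat.lt_succ_iff, Finsupp.equivFunOnFinite_apply, h2]
    constructor
    · rintro ⟨h3, h4⟩
      exact ⟨fun i => le_trans (Finset.single_le_sum (f := fun i => n i)
        (fun i _ => Nat.zero_le _) (Finset.mem_univ i)) h3, h3, h4⟩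
    · rintro ⟨-, h3, h4⟩
      exact ⟨h3, h4⟩
  have eA : A ≃ {a : Fin m → ℕ // a ∈ Fgood} :=
    (Finsupp.equivFunOnFinite (α := Fin m) (M := ℕ)).subtypeEquiv hiff
  haveI : Fintype A := Fintype.ofEquiv _ eA.symm
  -- injectivity of evaluation on A-supported polynomials
  have hAdeg : restrictSupport F A ≤ restrictDegree (Fin m) F (q - 1) :=
    restrictSupport_mono (R := F) (fun n hn => hn.2)
  set φ := (evalVec F m).comp (restrictSupport F A).subtype with hφ
  have hker : LinearMap.ker φ = ⊥ := by
    rw [LinearMap.ker_eq_bot']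
    intro x hx
    have hx0 : x.1 = 0 := by
      exact evalVec_injOn_restrictDegree F m x.1 (hAdeg x.2) hx
    exact Subtype.ext hx0
  have hrange : LinearMap.range φ = (restrictSupport F A).map (evalVec F m) := by
    rw [hφ, LinearMap.range_comp, Submodule.range_subtype]
  have e2 : (restrictSupport F A) ≃ₗ[F] GRM F ν m := by
    rw [GRM_eq_map, ← hrange]
    exact LinearEquiv.ofInjective φ (LinearMap.ker_eq_bot.1 hker)
  rw [← e2.finrank_eq, Module.finrank_eq_card_basis (basisRestrictSupport F A),
    Fintype.card_congr eA, Fintype.card_coe]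

/-- For a prime power `q` (the cardinality of the finite field `F`), `m ≥ 1`,
and `0 ≤ ν ≤ m(q-1)`, the dimension of `R_q(ν,m)` over `F_q` equals
`Σ_{j=0}^{m} (-1)^j C(m,j) C(m+ν-jq, ν-jq)`, the binomial being `0` when `ν - jq < 0`. -/
theorem grm_dim (F : Type*) [Field F] [Fintype F] (m ν : ℕ)
    (hm : 1 ≤ m) (hν : ν ≤ m * (Fintype.card F - 1)) :
    (Module.finrank F (GRM F ν m) : ℤ) =
      ∑ j ∈ Finset.range (m + 1), (-1 : ℤ) ^ j * (m.choose j : ℤ) *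
        (if j * Fintype.card F ≤ ν then
          ((m + ν - j * Fintype.card F).choose (ν - j * Fintype.card F) : ℤ) else 0) := by
  rw [grm_finrank_eq F m ν]
  exact IE_count Fintype.card_pos
end

section
/- Let q be a prime power, m ≥ 1, and 0 ≤ ν1 < ν2 ≤ m(q-1)-1. Set C1 = R_q(ν1,m) and C2 = R_q(ν2,m). Then C1 is a proper subset of C2, and the minimum weight among the codewords in C2 \ C1 equals the minimum weight of C2 (i.e., wt(C2 \ C1) = wt(C2)). -/
namespace GRMAux
open MvPolynomial

/-- reduced exponent -/
def redE (q k : ℕ) : ℕ := if k = 0 then 0 else (k - 1) % (q - 1) + 1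

lemma redE_zero (q : ℕ) : redE q 0 = 0 := rfl

lemma redE_le (q k : ℕ) : redE q k ≤ k := by
  unfold redE
  rcases k with _ | n
  · simp
  · simp only [Nat.succ_ne_zero, if_false, Nat.succ_sub_one]
    have := Nat.mod_le n (q - 1)
    omega

lemma redE_le_sub (q : ℕ) (hq : 2 ≤ q) (k : ℕ) : redE q k ≤ q - 1 := by
  unfold redE
  rcases k with _ | n
  · simp
  · simp only [Nat.succ_ne_zero, if_false, Nat.succ_sub_one]
    have h : n % (q - 1) < q - 1 := Nat.mod_lt _ (by omega)
    omega

lemma redE_eq_self (q : ℕ) {k : ℕ} (hk : k ≤ q - 1) : redE q k = k := by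
  unfold redE
  rcases k with _ | n
  · rfl
  · simp only [Nat.succ_ne_zero, if_false, Nat.succ_sub_one]
    rw [Nat.mod_eq_of_lt (by omega)]

lemma redE_pos (q : ℕ) {k : ℕ} (hk : k ≠ 0) : redE q k ≠ 0 := by
  unfold redE
  rcases k with _ | n
  · exact absurd rfl hk
  · simp

variable {F : Type*} [Field F] [Fintype F] {m : ℕ}

lemma pow_redE (x : F) (k : ℕ) : x ^ redE (Fintype.card F) k = x ^ k := by
  rcases k with _ | n
  · rfl
  · rcases eq_or_ne x 0 with rfl | hx
    · rw [zero_pow (redE_pos _ (Nat.succ_ne_zero n)), zero_pow (Nat.succ_ne_zero n)]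
    · show x ^ (n % (Fintype.card F - 1) + 1) = x ^ (n + 1)
      rw [pow_succ, pow_succ]
      congr 1
      conv_rhs => rw [← Nat.div_add_mod n (Fintype.card F - 1)]
      rw [pow_add, pow_mul, FiniteField.pow_card_sub_one_eq_one x hx, one_pow, one_mul]

/-- reduced exponent vector -/
noncomputable def redExp (q : ℕ) (e : Fin m →₀ ℕ) : Fin m →₀ ℕ := Finsupp.mapRange (redE q) rfl e

lemma redExp_apply (q : ℕ) (e : Fin m →₀ ℕ) (i : Fin m) : redExp q e i = redE q (e i) :=
  Finsupp.mapRange_apply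

lemma redExp_eq_self (q : ℕ) {e : Fin m →₀ ℕ} (h : ∀ i, e i ≤ q - 1) : redExp q e = e := by
  ext i
  rw [redExp_apply, redE_eq_self _ (h i)]

lemma sum_eq (e : Fin m →₀ ℕ) : (e.sum fun _ n => n) = ∑ i, e i :=
  Finsupp.sum_fintype _ _ (fun _ => rfl)

lemma redExp_sum_le (q : ℕ) (e : Fin m →₀ ℕ) :
    ((redExp q e).sum fun _ n => n) ≤ e.sum fun _ n => n := by
  rw [sum_eq, sum_eq]
  exact Finset.sum_le_sum fun i _ => by rw [redExp_apply]; exact redE_le _ _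


variable (F) in
/-- multiply by monomial `k` and reduce exponents -/
noncomputable def redMul (k : Fin m →₀ ℕ) (g : MvPolynomial (Fin m) F) : MvPolynomial (Fin m) F :=
  ∑ u ∈ g.support, monomial (redExp (Fintype.card F) (u + k)) (coeff u g)

lemma coeff_redMul (k : Fin m →₀ ℕ) (g : MvPolynomial (Fin m) F) (t : Fin m →₀ ℕ) :
    coeff t (redMul F k g) =
      ∑ u ∈ g.support, if redExp (Fintype.card F) (u + k) = t then coeff u g else 0 := by
  simp [redMul, coeff_sum, coeff_monomial]

lemma redMul_mem (k : Fin m →₀ ℕ) (g : MvPolynomial (Fin m) F) :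
    redMul F k g ∈ restrictDegree (Fin m) F (Fintype.card F - 1) := by
  rw [mem_restrictDegree]
  intro s hs i
  have hs' : coeff s (redMul F k g) ≠ 0 := mem_support_iff.mp hs
  rw [coeff_redMul] at hs'
  obtain ⟨u, _, hne⟩ := Finset.exists_ne_zero_of_sum_ne_zero hs'
  have h : redExp (Fintype.card F) (u + k) = s := by
    by_contra h; rw [if_neg h] at hne; exact hne rfl
  rw [← h, redExp_apply]
  exact redE_le_sub _ Fintype.one_lt_card _

lemma eval_redMul (k : Fin m →₀ ℕ) (g : MvPolynomial (Fin m) F) (P : Fin m → F) :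
    eval P (redMul F k g) = eval P (monomial k (1 : F)) * eval P g := by
  conv_rhs => rw [← support_sum_monomial_coeff g]
  rw [map_sum, Finset.mul_sum, redMul, map_sum]
  refine Finset.sum_congr rfl fun u hu => ?_
  rw [eval_monomial, eval_monomial, eval_monomial]
  rw [Finsupp.prod_fintype _ _ (fun _ => pow_zero _), Finsupp.prod_fintype _ _ (fun _ => pow_zero _),
    Finsupp.prod_fintype _ _ (fun _ => pow_zero _)]
  have h1 : ∀ i : Fin m, P i ^ (redExp (Fintype.card F) (u + k)) i = P i ^ u i * P i ^ k i := by
    intro i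
    rw [redExp_apply, pow_redE, Finsupp.add_apply, pow_add]
  rw [Finset.prod_congr rfl (fun i _ => h1 i), Finset.prod_mul_distrib]
  ring

lemma totalDegree_redMul_le (k : Fin m →₀ ℕ) (g : MvPolynomial (Fin m) F) :
    (redMul F k g).totalDegree ≤ g.totalDegree + (k.sum fun _ n => n) := by
  refine (totalDegree_finset_sum _ _).trans (Finset.sup_le fun u hu => ?_)
  rcases eq_or_ne (coeff u g) 0 with h | h
  · simp [h]
  · rw [totalDegree_monomial _ h]
    refine (redExp_sum_le _ _).trans ?_
    rw [Finsupp.sum_add_index' (fun _ => rfl) (fun _ _ _ => rfl)]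
    exact Nat.add_le_add_right (le_totalDegree hu) _

lemma mem_GRM_iff {ν : ℕ} {v : (Fin m → F) → F} :
    v ∈ GRM F ν m ↔ ∃ g, g ∈ restrictDegree (Fin m) F (Fintype.card F - 1) ∧
      g.totalDegree ≤ ν ∧ evalVec F m g = v := by
  constructor
  · rintro ⟨f, hf, rfl⟩
    replace hf : f.totalDegree ≤ ν := (mem_restrictTotalDegree _ _ _).mp hf
    refine ⟨redMul F 0 f, redMul_mem _ _, ?_, ?_⟩
    · have h := totalDegree_redMul_le 0 f
      simpa using h.trans (by simpa using hf)
    · funext P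
      show eval P (redMul F 0 f) = eval P f
      rw [eval_redMul]
      simp
  · rintro ⟨g, _, hdeg, rfl⟩
    exact ⟨g, (mem_restrictTotalDegree _ _ _).mpr hdeg, rfl⟩

/-- universe-safe version of `eq_zero_of_eval_eq_zero` -/
lemma eval_zero_of_restrict {p : MvPolynomial (Fin m) F}
    (hp : p ∈ restrictDegree (Fin m) F (Fintype.card F - 1))
    (h : ∀ P : Fin m → F, eval P p = 0) : p = 0 := by
  classical
  set e : Fin m → ULift.{u_1} (Fin m) := fun i => ULift.up i with he
  have hinj : Function.Injective e := fun a b hab => congrArg ULift.down hab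
  have h0 : rename e p = 0 := by
    refine eq_zero_of_eval_eq_zero (ULift.{u_1} (Fin m)) F _ (fun v => ?_) ?_
    · rw [eval_rename]; exact h _
    · rw [mem_restrictDegree]
      intro s hs i
      rw [support_rename_of_injective hinj, Finset.mem_image] at hs
      obtain ⟨u, hu, rfl⟩ := hs
      rcases eq_or_ne i (e i.down) with hi | hi
      · rw [hi, Finsupp.mapDomain_apply hinj]
        exact (mem_restrictDegree _ _ _).mp hp u hu i.down
      · rw [Finsupp.mapDomain_notin_range]
        · exact Nat.zero_le _
        · rintro ⟨j, rfl⟩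
          exact hi (by rw [he])
  exact (rename_injective e hinj) (by rw [h0, map_zero])

lemma eval_injOn {g₁ g₂ : MvPolynomial (Fin m) F}
    (h₁ : g₁ ∈ restrictDegree (Fin m) F (Fintype.card F - 1))
    (h₂ : g₂ ∈ restrictDegree (Fin m) F (Fintype.card F - 1))
    (h : evalVec F m g₁ = evalVec F m g₂) : g₁ = g₂ := by
  have hz : g₁ - g₂ = 0 := by
    refine eval_zero_of_restrict (Submodule.sub_mem _ h₁ h₂) (fun P => ?_)
    have hP : eval P g₁ = eval P g₂ := congrFun h P
    rw [map_sub, hP, sub_self]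
  exact sub_eq_zero.mp hz

lemma not_mem_GRM {g : MvPolynomial (Fin m) F}
    (hg : g ∈ restrictDegree (Fin m) F (Fintype.card F - 1)) {ν : ℕ}
    (hν : ν < g.totalDegree) : evalVec F m g ∉ GRM F ν m := by
  intro hmem
  obtain ⟨g', hg', hdeg', heq⟩ := mem_GRM_iff.mp hmem
  rw [eval_injOn hg' hg heq] at hdeg'
  omega


lemma bump {g : MvPolynomial (Fin m) F}
    (hg : g ∈ restrictDegree (Fin m) F (Fintype.card F - 1)) (hne : g ≠ 0)
    (hd : g.totalDegree < m * (Fintype.card F - 1)) :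
    ∃ g', g' ∈ restrictDegree (Fin m) F (Fintype.card F - 1) ∧
      g'.totalDegree = g.totalDegree + 1 ∧ g' ≠ 0 ∧
      ∀ P : Fin m → F, eval P g' ≠ 0 → eval P g ≠ 0 := by
  classical
  set q := Fintype.card F with hqdef
  have hq : 2 ≤ q := Fintype.one_lt_card
  -- leading monomial
  obtain ⟨e₀, he₀, hsup⟩ := Finset.exists_mem_eq_sup g.support
    (support_nonempty.mpr hne) (fun s => s.sum fun _ n => n)
  have hdeg0 : g.totalDegree = ∑ j, e₀ j := by rw [totalDegree, hsup, sum_eq]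
  have hbound : ∀ u ∈ g.support, ∀ i, u i ≤ q - 1 := (mem_restrictDegree _ _ _).mp hg
  -- find a coordinate below q - 1
  have hex : ∃ i, e₀ i < q - 1 := by
    by_contra hcon
    push_neg at hcon
    have : m * (q - 1) ≤ ∑ j, e₀ j := by
      calc m * (q - 1) = ∑ _j : Fin m, (q - 1) := by
            rw [Finset.sum_const, Finset.card_univ, Fintype.card_fin, smul_eq_mul]
        _ ≤ ∑ j, e₀ j := Finset.sum_le_sum fun j _ => hcon j
    omega
  obtain ⟨i, hi⟩ := hex
  set t : Fin m →₀ ℕ := e₀ + Finsupp.single i 1 with htdef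
  have hkey : ∀ u ∈ g.support, redExp q (u + Finsupp.single i 1) = t → u = e₀ := by
    intro u hu h
    have happ : ∀ j, redE q (u j + Finsupp.single i 1 j) = e₀ j + Finsupp.single i 1 j := by
      intro j
      have := DFunLike.congr_fun h j
      rwa [redExp_apply, Finsupp.add_apply, htdef, Finsupp.add_apply] at this
    have hji : ∀ j, j ≠ i → u j = e₀ j := by
      intro j hj
      have h1 := happ j
      rw [Finsupp.single_apply, if_neg (Ne.symm hj), Nat.add_zero, Nat.add_zero,
        redE_eq_self q (hbound u hu j)] at h1
      exact h1
    have h2 := happ i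
    rw [Finsupp.single_apply, if_pos rfl] at h2
    rcases lt_or_eq_of_le (hbound u hu i) with hui | hui
    · rw [redE_eq_self q (by omega)] at h2
      ext j
      rcases eq_or_ne j i with rfl | hj
      · omega
      · exact hji j hj
    · exfalso
      have hq1 : redE q (u i + 1) = 1 := by
        unfold redE
        rw [if_neg (by omega)]
        have : u i + 1 - 1 = q - 1 := by omega
        rw [this, Nat.mod_self]
      rw [hq1] at h2
      have he0i : e₀ i = 0 := by omega
      have hud : (u.sum fun _ n => n) ≤ g.totalDegree := le_totalDegree hu
      rw [sum_eq, hdeg0] at hud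
      have hsum : ∑ j, u j = (∑ j ∈ Finset.univ.erase i, u j) + u i :=
        (Finset.sum_erase_add _ _ (Finset.mem_univ i)).symm
      have hsum0 : ∑ j, e₀ j = (∑ j ∈ Finset.univ.erase i, e₀ j) + e₀ i :=
        (Finset.sum_erase_add _ _ (Finset.mem_univ i)).symm
      have heq : ∑ j ∈ Finset.univ.erase i, u j = ∑ j ∈ Finset.univ.erase i, e₀ j :=
        Finset.sum_congr rfl fun j hj => hji j (Finset.ne_of_mem_erase hj)
      omega
  have hfix : redExp q (e₀ + Finsupp.single i 1) = t := by
    refine redExp_eq_self q fun j => ?_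
    rw [Finsupp.add_apply, Finsupp.single_apply]
    rcases eq_or_ne i j with rfl | hj
    · rw [if_pos rfl]
      omega
    · rw [if_neg hj, Nat.add_zero]
      exact hbound e₀ he₀ j
  have hcoeff : coeff t (redMul F (Finsupp.single i 1) g) = coeff e₀ g := by
    rw [coeff_redMul, Finset.sum_eq_single e₀]
    · rw [if_pos hfix]
    · intro u hu hune
      rw [if_neg fun hcon => hune (hkey u hu hcon)]
    · intro habs
      exact absurd he₀ habs
  have hcne : coeff e₀ g ≠ 0 := mem_support_iff.mp he₀
  have htsum : (t.sum fun _ n => n) = g.totalDegree + 1 := by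
    rw [htdef, Finsupp.sum_add_index' (fun _ => rfl) (fun _ _ _ => rfl), sum_eq, ← hdeg0,
      Finsupp.sum_single_index rfl]
  refine ⟨redMul F (Finsupp.single i 1) g, redMul_mem _ _, ?_, ?_, ?_⟩
  · refine le_antisymm ?_ ?_
    · refine (totalDegree_redMul_le _ _).trans ?_
      rw [Finsupp.sum_single_index rfl]
    · have ht : t ∈ (redMul F (Finsupp.single i 1) g).support :=
        mem_support_iff.mpr (by rw [hcoeff]; exact hcne)
      have := le_totalDegree ht
      rwa [htsum] at this
  · intro h0
    rw [h0, coeff_zero] at hcoeff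
    exact hcne hcoeff.symm
  · intro P hP hgz
    exact hP (by rw [eval_redMul, hgz, mul_zero])

lemma reach : ∀ n, n ≤ m * (Fintype.card F - 1) →
    ∀ g : MvPolynomial (Fin m) F, g ∈ restrictDegree (Fin m) F (Fintype.card F - 1) → g ≠ 0 →
    g.totalDegree ≤ n →
    ∃ g', g' ∈ restrictDegree (Fin m) F (Fintype.card F - 1) ∧ g'.totalDegree = n ∧ g' ≠ 0 ∧
      ∀ P : Fin m → F, eval P g' ≠ 0 → eval P g ≠ 0 := by
  intro n
  induction n with
  | zero => exact fun _ g hg hne hd => ⟨g, hg, Nat.le_zero.mp hd, hne, fun _ h => h⟩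
  | succ n ih =>
    intro hn g hg hne hd
    rcases eq_or_lt_of_le hd with heq | hlt
    · exact ⟨g, hg, heq, hne, fun _ h => h⟩
    · obtain ⟨g₁, hg₁, hdeg₁, hne₁, hsupp₁⟩ := ih (by omega) g hg hne (by omega)
      obtain ⟨g₂, hg₂, hdeg₂, hne₂, hsupp₂⟩ := bump hg₁ hne₁ (by omega)
      exact ⟨g₂, hg₂, by omega, hne₂, fun P h => hsupp₁ P (hsupp₂ P h)⟩

lemma wt_mono {v v' : (Fin m → F) → F} (h : ∀ P, v' P ≠ 0 → v P ≠ 0) : wt v' ≤ wt v :=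
  Nat.card_le_card_of_injective (fun x => ⟨x.1, h x.1 x.2⟩) (by
    intro a b hab
    simp only [Subtype.mk.injEq] at hab
    exact Subtype.ext hab)


end GRMAux

/-- For a prime power `q` (the cardinality of the finite field `F`), `m ≥ 1`,
and `0 ≤ ν₁ < ν₂ ≤ m(q-1)-1`, the code `C₁ = R_q(ν₁,m)` is a proper subset of
`C₂ = R_q(ν₂,m)`, and the minimum weight among codewords in `C₂ \ C₁` equals the minimum
weight of `C₂`. -/
theorem grm_wt_diff (F : Type*) [Field F] [Fintype F] (m ν₁ ν₂ : ℕ)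
    (hm : 1 ≤ m) (h12 : ν₁ < ν₂) (h2 : ν₂ ≤ m * (Fintype.card F - 1) - 1) :
    GRM F ν₁ m < GRM F ν₂ m ∧
      sInf { w | ∃ v, v ∈ GRM F ν₂ m ∧ v ∉ GRM F ν₁ m ∧ wt v = w } =
        sInf { w | ∃ v ∈ GRM F ν₂ m, v ≠ 0 ∧ wt v = w } := by
  classical
  have hq : 2 ≤ Fintype.card F := Fintype.one_lt_card
  have hM : 0 < m * (Fintype.card F - 1) := Nat.mul_pos (by omega) (by omega)
  set M := m * (Fintype.card F - 1) with hMdef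
  have h1mem : (1 : MvPolynomial (Fin m) F) ∈
      MvPolynomial.restrictDegree (Fin m) F (Fintype.card F - 1) := by
    rw [MvPolynomial.mem_restrictDegree]
    intro s hs i
    rw [MvPolynomial.mem_support_iff, MvPolynomial.coeff_one] at hs
    by_cases h0 : (0 : Fin m →₀ ℕ) = s
    · rw [← h0]; simp
    · rw [if_neg h0] at hs; exact absurd rfl hs
  obtain ⟨gW, hgW, hdegW, hneW, -⟩ := GRMAux.reach (ν₁ + 1) (by omega) 1 h1mem one_ne_zero
    (by simp)
  have hvW2 : evalVec F m gW ∈ GRM F ν₂ m := GRMAux.mem_GRM_iff.mpr ⟨gW, hgW, by omega, rfl⟩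
  have hvW1 : evalVec F m gW ∉ GRM F ν₁ m := GRMAux.not_mem_GRM hgW (by omega)
  have hmono : GRM F ν₁ m ≤ GRM F ν₂ m :=
    Submodule.map_mono (fun p hp => (MvPolynomial.mem_restrictTotalDegree _ _ _).mpr
      (((MvPolynomial.mem_restrictTotalDegree _ _ _).mp hp).trans (le_of_lt h12)))
  have hvWne : evalVec F m gW ≠ 0 := fun h => hvW1 (h ▸ (GRM F ν₁ m).zero_mem)
  refine ⟨lt_of_le_of_ne hmono (fun hEq => hvW1 (by rw [hEq]; exact hvW2)), ?_⟩
  have hSdne : { w | ∃ v, v ∈ GRM F ν₂ m ∧ v ∉ GRM F ν₁ m ∧ wt v = w }.Nonempty :=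
    ⟨wt (evalVec F m gW), evalVec F m gW, hvW2, hvW1, rfl⟩
  have hS2ne : { w | ∃ v ∈ GRM F ν₂ m, v ≠ 0 ∧ wt v = w }.Nonempty :=
    ⟨wt (evalVec F m gW), evalVec F m gW, hvW2, hvWne, rfl⟩
  refine le_antisymm ?_ ?_
  · obtain ⟨v, hv2, hvne, hw⟩ := Nat.sInf_mem hS2ne
    obtain ⟨g, hg, hdeg, hveq⟩ := GRMAux.mem_GRM_iff.mp hv2
    have hgne : g ≠ 0 := fun h => hvne (by rw [← hveq, h, map_zero])
    rcases le_or_gt g.totalDegree ν₁ with hle | hgt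
    · obtain ⟨g', hg', hdeg', hne', hsupp'⟩ := GRMAux.reach (ν₁ + 1) (by omega) g hg hgne
        (by omega)
      have h2' : evalVec F m g' ∈ GRM F ν₂ m := GRMAux.mem_GRM_iff.mpr ⟨g', hg', by omega, rfl⟩
      have h1' : evalVec F m g' ∉ GRM F ν₁ m := GRMAux.not_mem_GRM hg' (by omega)
      have hwle : wt (evalVec F m g') ≤ wt v := by
        rw [← hveq]
        exact GRMAux.wt_mono hsupp'
      refine le_trans (Nat.sInf_le ⟨evalVec F m g', h2', h1', rfl⟩) ?_
      rw [← hw]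
      exact hwle
    · have h1' : v ∉ GRM F ν₁ m := by
        rw [← hveq]
        exact GRMAux.not_mem_GRM hg hgt
      rw [← hw]
      exact Nat.sInf_le ⟨v, hv2, h1', rfl⟩
  · obtain ⟨v, hv2, hv1, hw⟩ := Nat.sInf_mem hSdne
    have hvne : v ≠ 0 := fun h => hv1 (h ▸ (GRM F ν₁ m).zero_mem)
    rw [← hw]
    exact Nat.sInf_le ⟨v, hv2, hvne, rfl⟩
end

section
/- Let q be a prime power, m ≥ 1, and 0 ≤ ν ≤ m(q-1)-1. Then the generalized Reed–Muller code R_{q^2}(ν,m) over F_{q^2} is contained in its Hermitian dual: R_{q^2}(ν,m) ⊆ R_{q^2}(ν,m)^{⊥h}. -/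
/-- For a prime power `q`, a finite field `E` with `q²` elements, `m ≥ 1`,
and `0 ≤ ν ≤ m(q-1)-1`, the code `R_{q²}(ν,m)` is contained in its Hermitian dual:
every pair of codewords has vanishing Hermitian inner product `Σ_P x(P)·(v(P))^q = 0`. -/
theorem grm_hermitian_self_orthogonal (q : ℕ) (hq : IsPrimePow q)
    (E : Type*) [Field E] [Fintype E] (hE : Fintype.card E = q ^ 2)
    (m ν : ℕ) (hm : 1 ≤ m) (hν : ν ≤ m * (q - 1) - 1) :
    ∀ v ∈ GRM E ν m, ∀ x ∈ GRM E ν m, ∑ P : Fin m → E, x P * (v P) ^ q = 0 := by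
  rintro v ⟨f, hf, rfl⟩ x ⟨g, hg, rfl⟩
  rw [SetLike.mem_coe, MvPolynomial.mem_restrictTotalDegree] at hf hg
  have key : ∀ P : Fin m → E,
      (evalVec E m g) P * ((evalVec E m f) P) ^ q = MvPolynomial.eval P (g * f ^ q) := by
    intro P; simp [evalVec]
  simp only [key]
  apply MvPolynomial.sum_eval_eq_zero
  rw [hE, Fintype.card_fin]
  have hq2 : 2 ≤ q := hq.two_le
  have hdeg : (g * f ^ q).totalDegree ≤ ν + q * ν := by
    calc (g * f ^ q).totalDegree ≤ g.totalDegree + (f ^ q).totalDegree :=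
          MvPolynomial.totalDegree_mul _ _
      _ ≤ ν + q * ν := by
          gcongr
          calc (f ^ q).totalDegree ≤ q * f.totalDegree := MvPolynomial.totalDegree_pow _ _
            _ ≤ q * ν := by gcongr
  have h1 : 1 ≤ m * (q - 1) := Nat.mul_pos hm (by omega)
  calc (g * f ^ q).totalDegree ≤ ν + q * ν := hdeg
    _ < (q ^ 2 - 1) * m := by nlinarith [Nat.sub_add_cancel h1, Nat.sub_add_cancel (le_of_lt (lt_of_lt_of_le one_lt_two hq2)), Nat.sub_add_cancel (show 1 ≤ q^2 by nlinarith)]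
end

section
/- Let q be a prime power, m ≥ 1, 0 ≤ ν ≤ m(q-1)-1, and (q+1)ν ≤ μ ≤ m(q^2-1)-1. If c ∈ F_q^{q^{2m}} is a vector with entries in F_q that (viewed in F_{q^2}^{q^{2m}}) lies in the Euclidean dual R_{q^2}(μ,m)^⊥, then Σ_{P ∈ F_{q^2}^m} c_P · Tr_{F_{q^2}/F_q}(a_P · b_P^q) = 0 for all a, b ∈ R_{q^2}(ν,m); that is, the subfield subcode R_{q^2}(μ,m)^⊥|_{F_q} is contained in the Hermitian puncture code P_h(R_{q^2}(ν,m)) = { (Tr_{F_{q^2}/F_q}(a_P b_P^q))_P : a, b ∈ R_{q^2}(ν,m) }^⊥. -/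
open MvPolynomial in
/-- For a prime power `q`, a finite field `E` with `q²` elements, `m ≥ 1`,
`0 ≤ ν ≤ m(q-1)-1` and `(q+1)ν ≤ μ ≤ m(q²-1)-1`: if `c` has all entries in `F_q`
(i.e. fixed by the Frobenius `x ↦ x^q`) and lies in the Euclidean dual of `R_{q²}(μ,m)`,
then `Σ_P c_P · Tr_{q²/q}(a_P b_P^q) = 0` for all `a, b ∈ R_{q²}(ν,m)`, where
`Tr_{q²/q}(x) = x + x^q`. -/
theorem grm_subfield_subcode_in_puncture (q : ℕ) (hq : IsPrimePow q)
    (E : Type*) [Field E] [Fintype E] (hE : Fintype.card E = q ^ 2)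
    (m ν μ : ℕ) (hm : 1 ≤ m) (hν : ν ≤ m * (q - 1) - 1)
    (hμ1 : (q + 1) * ν ≤ μ) (hμ2 : μ ≤ m * (q ^ 2 - 1) - 1)
    (c : (Fin m → E) → E) (hcF : ∀ P, (c P) ^ q = c P)
    (hcdual : ∀ y ∈ GRM E μ m, ∑ P : Fin m → E, c P * y P = 0) :
    ∀ a ∈ GRM E ν m, ∀ b ∈ GRM E ν m,
      ∑ P : Fin m → E, c P * (a P * (b P) ^ q + (a P * (b P) ^ q) ^ q) = 0 := by
  obtain ⟨p, n, hp, hn, hpn⟩ := hq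
  have hp' : p.Prime := hp.nat_prime
  haveI : Fact p.Prime := ⟨hp'⟩
  haveI hcharp : CharP E p := by
    set p' := ringChar E with hpdef
    haveI : CharP E p' := ringChar.charP E
    obtain ⟨k, hpp, hk⟩ := FiniteField.card E p'
    have heq : p' ^ (k : ℕ) = p ^ (2 * n) := by
      rw [← hk, hE, ← hpn, ← pow_mul, Nat.mul_comm]
    have : p' = p := by
      have hdvd : p' ∣ p ^ (2 * n) := heq ▸ dvd_pow_self p' k.pos.ne'
      exact (Nat.Prime.eq_one_or_self_of_dvd hp' _ ((Nat.Prime.dvd_of_dvd_pow hpp hdvd))).resolve_left hpp.ne_one |>.symm ▸ rfl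
    rw [← this]; infer_instance
  haveI : ExpChar E p := ExpChar.prime hp'
  rintro a ha b hb
  obtain ⟨f, hf, rfl⟩ := ha
  obtain ⟨g, hg, rfl⟩ := hb
  have hfd : f.totalDegree ≤ ν := (mem_restrictTotalDegree _ _ _).1 hf
  have hgd : g.totalDegree ≤ ν := (mem_restrictTotalDegree _ _ _).1 hg
  have hmem : evalVec E m (f * g ^ q) ∈ GRM E μ m := by
    refine Submodule.mem_map_of_mem ?_
    rw [mem_restrictTotalDegree]
    calc (f * g ^ q).totalDegree ≤ f.totalDegree + (g ^ q).totalDegree :=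
          totalDegree_mul _ _
      _ ≤ ν + q * ν := add_le_add hfd ((totalDegree_pow _ _).trans (Nat.mul_le_mul_left q hgd))
      _ = (q + 1) * ν := by ring
      _ ≤ μ := hμ1
  have hval : ∀ P : Fin m → E, evalVec E m (f * g ^ q) P = evalVec E m f P * (evalVec E m g P) ^ q := by
    intro P; simp [evalVec]
  have S0 : ∑ P : Fin m → E, c P * (evalVec E m f P * (evalVec E m g P) ^ q) = 0 := by
    have := hcdual _ hmem
    simpa only [hval] using this
  have hφ : ∀ x : E, (iterateFrobenius E p n) x = x ^ q := by
    intro x; rw [iterateFrobenius_def, hpn]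
  have S1 : ∑ P : Fin m → E, c P * (evalVec E m f P * (evalVec E m g P) ^ q) ^ q = 0 := by
    have : ∑ P : Fin m → E, c P * (evalVec E m f P * (evalVec E m g P) ^ q) ^ q
        = (iterateFrobenius E p n) (∑ P : Fin m → E, c P * (evalVec E m f P * (evalVec E m g P) ^ q)) := by
      rw [map_sum]
      refine Finset.sum_congr rfl fun P _ => ?_
      rw [map_mul, hφ, hφ, hcF]
    rw [this, S0, map_zero]
  calc ∑ P : Fin m → E, c P * (evalVec E m f P * (evalVec E m g P) ^ q + (evalVec E m f P * (evalVec E m g P) ^ q) ^ q)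
      = ∑ P : Fin m → E, (c P * (evalVec E m f P * (evalVec E m g P) ^ q) + c P * (evalVec E m f P * (evalVec E m g P) ^ q) ^ q) := by
        refine Finset.sum_congr rfl fun P _ => ?_; ring
    _ = 0 := by rw [Finset.sum_add_distrib, S0, S1, add_zero]
end

section
/- Delsarte's theorem: let q be a prime power, Q = q^e a power of q with e ≥ 1, and D an F_Q-linear code of length n over F_Q. Then the Euclidean dual (over F_q) of the componentwise trace code Tr_{F_Q/F_q}(D) = { (Tr_{F_Q/F_q}(d_1),…,Tr_{F_Q/F_q}(d_n)) : d ∈ D } equals the subfield subcode of the dual: (Tr_{F_Q/F_q}(D))^⊥ = D^⊥ ∩ F_q^n. -/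
/-- Delsarte's theorem: for finite fields `F = F_q ⊆ E = F_Q` with
`Q = q^e`, `e ≥ 1`, and an `F_Q`-linear code `D` of length `n`, the Euclidean dual (over
`F_q`) of the componentwise trace code `Tr_{F_Q/F_q}(D)` equals the subfield subcode
`D^⊥ ∩ F_q^n` of the dual (identifying `F_q^n` with its image under `algebraMap`). -/
theorem delsarte (F E : Type*) [Field F] [Fintype F] [Field E] [Fintype E] [Algebra F E]
    (e : ℕ) (he : 1 ≤ e) (hQ : Fintype.card E = Fintype.card F ^ e)
    (n : ℕ) (D : Submodule E (Fin n → E)) :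
    { x : Fin n → F | ∀ d ∈ D, ∑ i, x i * Algebra.trace F E (d i) = 0 } =
      { x : Fin n → F | ∀ d ∈ D, ∑ i, algebraMap F E (x i) * d i = 0 } := by
  have key : ∀ (x : Fin n → F) (d : Fin n → E),
      ∑ i, x i * Algebra.trace F E (d i)
        = Algebra.trace F E (∑ i, algebraMap F E (x i) * d i) := by
    intro x d
    rw [map_sum]
    refine Finset.sum_congr rfl fun i _ => ?_
    rw [← Algebra.smul_def, map_smul, smul_eq_mul]
  ext x
  simp only [Set.mem_setOf_eq]
  constructor
  · intro h d hd
    have hnd := traceForm_nondegenerate F E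
    apply hnd.1
    intro c
    have := h (c • d) (D.smul_mem c hd)
    rw [key] at this
    have heq : ∑ i, algebraMap F E (x i) * (c • d) i
        = c * ∑ i, algebraMap F E (x i) * d i := by
      rw [Finset.mul_sum]
      refine Finset.sum_congr rfl fun i _ => ?_
      simp [Pi.smul_apply, smul_eq_mul]; ring
    rw [heq] at this
    rw [Algebra.traceForm_apply, mul_comm]
    exact this
  · intro h d hd
    rw [key, h d hd, map_zero]
end

section
/- Let q be a prime power, m ≥ 1, 0 ≤ ν ≤ m(q-1)-1, and let d(ν) = (R+1)q^Q where m(q-1)-ν = (q-1)Q + R with 0 ≤ R < q-1. Then there exists an F_q-linear bijection φ : F_q^m → F_{q^m} such that for every polynomial f ∈ F_q[x_1,…,x_m] of total degree at most ν there exists a univariate polynomial g ∈ F_{q^m}[x] of degree at most q^m - d(ν) with f(P) = g(φ(P)) for all P ∈ F_q^m. In other words, R_q(ν,m) is contained in the subfield subcode R_{q^m}(q^m - d(ν), 1)|_{F_q}. -/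
lemma tdeg_map_le {σ R S : Type*} [CommSemiring R] [CommSemiring S] (f : R →+* S)
    (p : MvPolynomial σ R) : (MvPolynomial.map f p).totalDegree ≤ p.totalDegree :=
  Finset.sup_mono (MvPolynomial.support_map_subset f p)

lemma digitsum_single (q k : ℕ) (hq : 2 ≤ q) (hk : k < q) : (Nat.digits q k).sum = k := by
  rcases Nat.eq_zero_or_pos k with rfl | h
  · simp
  · rw [Nat.digits_def' hq h, Nat.mod_eq_of_lt hk, Nat.div_eq_of_lt hk]
    simp

lemma digitsum_le (q R : ℕ) (hq : 2 ≤ q) (hR : R + 1 ≤ q - 1) :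
    ∀ Q k, k + 1 ≤ (R + 1) * q ^ Q → (Nat.digits q k).sum ≤ (q - 1) * Q + R := by
  intro Q
  induction Q with
  | zero => intro k hk; rw [pow_zero, mul_one] at hk; rw [digitsum_single q k hq (by omega)]; omega
  | succ Q ih =>
    intro k hk
    rcases Nat.eq_zero_or_pos k with rfl | h
    · simp
    rw [Nat.digits_def' hq h, List.sum_cons]
    have ha : k / q + 1 ≤ (R + 1) * q ^ Q := by
      have : k / q < (R + 1) * q ^ Q := by
        rw [Nat.div_lt_iff_lt_mul (by omega)]
        calc k < (R + 1) * q ^ (Q + 1) := by omega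
        _ = (R + 1) * q ^ Q * q := by ring
      omega
    have := ih (k / q) ha
    have hb : k % q < q := Nat.mod_lt _ (by omega)
    have : (q - 1) * (Q + 1) = (q - 1) * Q + (q - 1) := by ring
    omega

lemma digitsum_lt (q R : ℕ) (hq : 2 ≤ q) (hR : R + 1 ≤ q - 1) :
    ∀ Q k, k + 2 ≤ (R + 1) * q ^ Q → (Nat.digits q k).sum + 1 ≤ (q - 1) * Q + R := by
  intro Q
  induction Q with
  | zero => intro k hk; rw [pow_zero, mul_one] at hk; rw [digitsum_single q k hq (by omega)]; omega
  | succ Q ih =>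
    intro k hk
    rcases Nat.eq_zero_or_pos k with rfl | h
    · have h1 : 1*1 ≤ (q-1)*(Q+1) := Nat.mul_le_mul (by omega) (by omega)
      simp; omega
    rw [Nat.digits_def' hq h, List.sum_cons]
    have hq0 : 0 < q := by omega
    have hprod : (R + 1) * q ^ (Q + 1) = (R + 1) * q ^ Q * q := by ring
    have hbd : k / q < (R + 1) * q ^ Q := by
      rw [Nat.div_lt_iff_lt_mul hq0]; omega
    have heq : (q - 1) * (Q + 1) = (q - 1) * Q + (q - 1) := by ring
    by_cases hcase : k / q + 2 ≤ (R + 1) * q ^ Q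
    · have := ih (k / q) hcase
      have hb : k % q < q := Nat.mod_lt _ hq0
      omega
    · have ha : k / q + 1 = (R + 1) * q ^ Q := by omega
      have := digitsum_le q R hq hR Q (k / q) (by omega)
      have hk2 : k = q * (k / q) + k % q := (Nat.div_add_mod k q).symm
      have hb : k % q + 2 ≤ q := by
        have : q * (k / q) + q = (R + 1) * q ^ Q * q := by
          rw [← ha]; ring
        omega
      omega

section
open MvPolynomial

lemma alg_eval {F E : Type*} [Field F] [Field E] [Algebra F E] {m : ℕ}
    (f : MvPolynomial (Fin m) F) (P : Fin m → F) :
    algebraMap F E (eval P f) =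
      eval (fun i => algebraMap F E (P i)) (map (algebraMap F E) f) := by
  rw [eval_map]
  rw [← eval₂_id (g := P) f, eval₂_comp_left (algebraMap F E) (RingHom.id F) P f]
  rfl

lemma sum_eval_zero (F : Type*) {E : Type*} [Field F] [Fintype F] [Field E] [Algebra F E]
    {m : ℕ} (u : MvPolynomial (Fin m) E)
    (hu : u.totalDegree < m * (Fintype.card F - 1)) :
    ∑ P : Fin m → F, eval (fun i => algebraMap F E (P i)) u = 0 := by
  simp only [eval_eq]
  rw [Finset.sum_comm]
  apply Finset.sum_eq_zero
  intro d hd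
  have hprod : ∀ x : Fin m → F, ∏ i ∈ d.support, (algebraMap F E) (x i) ^ d i
      = ∏ i : Fin m, (algebraMap F E) (x i) ^ d i := by
    intro x
    apply Finset.prod_subset (Finset.subset_univ _)
    intro i _ hi
    rw [Finsupp.notMem_support_iff.mp hi, pow_zero]
  simp only [hprod]
  rw [← Finset.mul_sum]
  -- find a coordinate with small exponent
  have hdeg : ∑ i : Fin m, d i ≤ u.totalDegree := by
    have h1 := le_totalDegree hd
    rwa [Finsupp.sum_fintype _ _ (fun _ => rfl)] at h1
  have hex : ∃ i0 : Fin m, d i0 < Fintype.card F - 1 := by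
    by_contra hc
    push_neg at hc
    have : m * (Fintype.card F - 1) ≤ ∑ i : Fin m, d i := by
      calc m * (Fintype.card F - 1) = ∑ _i : Fin m, (Fintype.card F - 1) := by
            simp [Finset.sum_const, Finset.card_univ, mul_comm]
        _ ≤ ∑ i : Fin m, d i := Finset.sum_le_sum fun i _ => hc i
    omega
  obtain ⟨i0, hi0⟩ := hex
  have : ∑ x : Fin m → F, ∏ i : Fin m, (algebraMap F E) (x i) ^ d i
      = ∏ i : Fin m, ∑ t : F, (algebraMap F E) t ^ d i := by
    rw [Fintype.prod_sum]
  rw [this]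
  rw [Finset.prod_eq_zero (Finset.mem_univ i0), mul_zero]
  have : ∑ t : F, (algebraMap F E) t ^ d i0 = algebraMap F E (∑ t : F, t ^ d i0) := by
    rw [map_sum]
    simp [map_pow]
  rw [this, FiniteField.sum_pow_lt_card_sub_one (K := F) (d i0) hi0, map_zero]
end

section
open MvPolynomial

lemma eval_map_frob {E : Type*} [Field E] {m : ℕ} (ψ : E →+* E) (N : ℕ)
    (hψ : ∀ x : E, ψ x = x ^ N) (pt : Fin m → E) (hpt : ∀ i, pt i ^ N = pt i)
    (u : MvPolynomial (Fin m) E) :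
    eval pt (map ψ u) = (eval pt u) ^ N := by
  rw [eval_map, ← hψ, ← eval₂_id (g := pt) u, eval₂_comp_left ψ (RingHom.id E) pt u]
  congr 1
  funext x
  rw [Function.comp_apply, hψ, hpt]

lemma pow_rep {F E : Type*} [Field F] [Fintype F] [Field E] [Fintype E] [Algebra F E]
    {m : ℕ} (φ : (Fin m → F) →ₗ[F] E) (ψ : E →+* E)
    (hψ : ∀ x : E, ψ x = x ^ Fintype.card F) (k : ℕ) :
    ∃ u : MvPolynomial (Fin m) E,
      u.totalDegree ≤ (Nat.digits (Fintype.card F) k).sum ∧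
      ∀ P : Fin m → F, eval (fun i => algebraMap F E (P i)) u = (φ P) ^ k := by
  have hq : 2 ≤ Fintype.card F := Fintype.one_lt_card
  set q := Fintype.card F with hqdef
  -- the linear polynomial L
  set L : MvPolynomial (Fin m) E :=
    ∑ i : Fin m, C (φ (fun j => if i = j then 1 else 0)) * X i with hL
  have hLdeg : L.totalDegree ≤ 1 := by
    refine le_trans (totalDegree_finset_sum _ _) (Finset.sup_le fun i _ => ?_)
    refine le_trans (totalDegree_mul _ _) ?_
    simp [totalDegree_C, totalDegree_X]
  have hLeval : ∀ P : Fin m → F, eval (fun i => algebraMap F E (P i)) L = φ P := by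
    intro P
    rw [LinearMap.pi_apply_eq_sum_univ φ P, hL]
    simp only [map_sum, eval_mul, eval_C, eval_X, map_smul]
    exact Finset.sum_congr rfl fun i _ => by rw [Algebra.smul_def]; ring
  induction k using Nat.strong_induction_on with
  | _ k ih =>
    rcases Nat.eq_zero_or_pos k with rfl | hk
    · exact ⟨1, by simp, fun P => by simp⟩
    obtain ⟨u, hudeg, hueval⟩ := ih (k / q) (Nat.div_lt_self hk (by omega))
    refine ⟨map ψ u * L ^ (k % q), ?_, ?_⟩
    · refine le_trans (totalDegree_mul _ _) ?_
      rw [Nat.digits_def' hq hk, List.sum_cons]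
      have h1 : (map ψ u).totalDegree ≤ u.totalDegree :=
        totalDegree_le_of_support_subset (support_map_subset _ _)
      have h2 : (L ^ (k % q)).totalDegree ≤ k % q := by
        refine le_trans (totalDegree_pow _ _) ?_
        calc k % q * L.totalDegree ≤ k % q * 1 := Nat.mul_le_mul_left _ hLdeg
          _ = k % q := mul_one _
      omega
    · intro P
      have hpt : ∀ i, (algebraMap F E (P i)) ^ q = algebraMap F E (P i) := by
        intro i; rw [← map_pow, FiniteField.pow_card]
      rw [eval_mul, eval_map_frob ψ q hψ _ hpt, hueval P, eval_pow, hLeval P,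
        ← pow_mul, ← pow_add]
      rw [mul_comm, Nat.div_add_mod]
end

section
open Polynomial

lemma interp {E : Type*} [Field E] [Fintype E] [DecidableEq E] (h : E → E) (d : ℕ)
    (hd2 : 2 ≤ d) (hdN : d ≤ Fintype.card E)
    (hsum : ∀ e : ℕ, e + 2 ≤ d → ∑ a : E, h a * a ^ e = 0) :
    ∃ g : Polynomial E, g.natDegree ≤ Fintype.card E - d ∧ ∀ b : E, g.eval b = h b := by
  set N := Fintype.card E with hN
  have hN2 : 2 ≤ N := Fintype.one_lt_card
  set g : Polynomial E := ∑ a : E, C (h a) * (1 - (X - C a) ^ (N - 1)) with hg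
  refine ⟨g, ?_, ?_⟩
  · rw [natDegree_le_iff_coeff_eq_zero]
    intro j hj
    have hj1 : 1 ≤ j := by omega
    set e := N - 1 - j with he
    have he2 : e + 2 ≤ d := by omega
    have hc : g.coeff j = (∑ a : E, h a * a ^ e) * (-((-1 : E) ^ e * (Nat.choose (N - 1) j : E))) := by
      rw [hg, finset_sum_coeff, Finset.sum_mul]
      refine Finset.sum_congr rfl fun a _ => ?_
      have hXa : X - C a = X + C (-a) := by rw [map_neg]; ring
      rw [coeff_C_mul, coeff_sub, hXa, coeff_X_add_C_pow, coeff_one,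
        if_neg (by omega : ¬ j = 0), neg_pow]
      ring
    rw [hc, hsum e he2, zero_mul]
  · intro b
    rw [hg, eval_finset_sum]
    rw [Finset.sum_eq_single b]
    · simp only [eval_mul, eval_C, eval_sub, eval_one, eval_pow, eval_X, sub_self]
      rw [zero_pow (by omega : N - 1 ≠ 0)]
      ring
    · intro a _ hab
      simp only [eval_mul, eval_C, eval_sub, eval_one, eval_pow, eval_X]
      rw [FiniteField.pow_card_sub_one_eq_one (b - a) (sub_ne_zero.mpr (Ne.symm hab))]
      ring
    · intro hb; exact absurd (Finset.mem_univ b) hb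
end


set_option maxHeartbeats 1000000 in
open MvPolynomial in
/-- For a prime power `q` (the cardinality of the finite field `F`), `m ≥ 1`,
`0 ≤ ν ≤ m(q-1)-1`, and `d(ν) = (R+1)q^Q` where `m(q-1)-ν = (q-1)Q + R`, `0 ≤ R < q-1`:
there is an `F_q`-linear bijection `φ : F_q^m → F_{q^m}` (with `F_{q^m}` realized as a
degree-`m` field extension `E` of `F`) such that every polynomial `f` of total degree at
most `ν` satisfies `f(P) = g(φ(P))` for some univariate `g` over `E` of degree at most
`q^m - d(ν)`; i.e. `R_q(ν,m) ⊆ R_{q^m}(q^m - d(ν), 1)|_{F_q}`. -/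
theorem grm_subcode_of_RS (F E : Type*) [Field F] [Fintype F] [Field E] [Fintype E]
    [Algebra F E] (m ν Q R : ℕ) (hdim : Module.finrank F E = m)
    (hm : 1 ≤ m) (hν : ν ≤ m * (Fintype.card F - 1) - 1)
    (hR : R < Fintype.card F - 1)
    (hQR : m * (Fintype.card F - 1) - ν = (Fintype.card F - 1) * Q + R) :
    ∃ φ : (Fin m → F) ≃ₗ[F] E,
      ∀ f : MvPolynomial (Fin m) F, f.totalDegree ≤ ν →
        ∃ g : Polynomial E,
          g.natDegree ≤ Fintype.card F ^ m - (R + 1) * Fintype.card F ^ Q ∧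
          ∀ P : Fin m → F, algebraMap F E (MvPolynomial.eval P f) = g.eval (φ P) := by
  classical
  set q := Fintype.card F with hqdef
  have hq : 2 ≤ q := Fintype.one_lt_card
  -- the linear bijection
  have : Module.Finite F E := Module.Finite.of_finite (R := F)
  obtain ⟨φ⟩ : Nonempty ((Fin m → F) ≃ₗ[F] E) :=
    ⟨(Module.finBasisOfFinrankEq F E hdim).equivFun.symm⟩
  refine ⟨φ, ?_⟩
  intro f hf
  -- cardinality of E
  have hNE : Fintype.card E = q ^ m := by
    rw [Module.card_eq_pow_finrank (K := F) (V := E), hdim]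
  -- the q-power Frobenius on E
  set p := ringChar F with hp
  haveI : CharP E p := charP_of_injective_algebraMap (algebraMap F E).injective p
  obtain ⟨n, hpprime, hcard⟩ := FiniteField.card F p
  haveI : ExpChar E p := ExpChar.prime hpprime
  set ψ : E →+* E := iterateFrobenius E p n with hψdef
  have hψ : ∀ x : E, ψ x = x ^ q := by
    intro x; rw [hψdef, iterateFrobenius_def, hqdef, hcard]
  -- arithmetic facts
  have hm1 : 1 ≤ m * (q - 1) := by
    calc 1 = 1 * 1 := rfl
    _ ≤ m * (q - 1) := Nat.mul_le_mul hm (by omega)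
  have hS1 : 1 ≤ (q - 1) * Q + R := by omega
  have hSm : (q - 1) * Q + R ≤ m * (q - 1) := by omega
  set d := (R + 1) * q ^ Q with hd
  have hd2 : 2 ≤ d := by
    rcases Nat.eq_zero_or_pos Q with rfl | hQ
    · have : (q - 1) * 0 = 0 := by ring
      rw [hd, pow_zero, mul_one]; omega
    · have h1 : q ≤ q ^ Q := by
        calc q = q ^ 1 := (pow_one q).symm
        _ ≤ q ^ Q := Nat.pow_le_pow_right (by omega) hQ
      calc 2 ≤ q := hq
      _ ≤ q ^ Q := h1
      _ = 1 * q ^ Q := (one_mul _).symm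
      _ ≤ (R + 1) * q ^ Q := Nat.mul_le_mul_right _ (by omega)
  have hdN : d ≤ q ^ m := by
    by_cases hc : Q < m
    · calc (R + 1) * q ^ Q ≤ q * q ^ Q := Nat.mul_le_mul_right _ (by omega)
      _ = q ^ (Q + 1) := by rw [pow_succ, mul_comm]
      _ ≤ q ^ m := Nat.pow_le_pow_right (by omega) (by omega)
    · have hcm2 : m * (q - 1) = (q - 1) * m := Nat.mul_comm _ _
      have hQm : Q = m := by
        by_contra hne
        have h3 : m + 1 ≤ Q := by omega
        have h4 : (q - 1) * (m + 1) ≤ (q - 1) * Q := Nat.mul_le_mul_left _ h3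
        have h5 : (q - 1) * (m + 1) = (q - 1) * m + (q - 1) := by ring
        omega
      subst hQm
      have hR0 : R = 0 := by omega
      subst hR0
      simp [hd]
  -- the word as a function on E
  set h : E → E := fun a => algebraMap F E (MvPolynomial.eval (φ.symm a) f) with hh
  -- parity checks
  have hsum : ∀ e : ℕ, e + 2 ≤ d → ∑ a : E, h a * a ^ e = 0 := by
    intro e he
    obtain ⟨u, hudeg, hueval⟩ := pow_rep (φ : (Fin m → F) →ₗ[F] E) ψ hψ e
    have hdig : (Nat.digits q e).sum + 1 ≤ (q - 1) * Q + R :=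
      digitsum_lt q R hq (by omega) Q e (by omega)
    have key : ∑ P : Fin m → F, h (φ P) * (φ P) ^ e = 0 := by
      have heq : ∀ P : Fin m → F,
          h (φ P) * (φ P) ^ e =
            eval (fun i => algebraMap F E (P i)) (map (algebraMap F E) f * u) := by
        intro P
        rw [hh]
        simp only [LinearEquiv.symm_apply_apply]
        rw [MvPolynomial.eval_mul, ← alg_eval, hueval P, LinearEquiv.coe_coe]
      rw [Finset.sum_congr rfl fun P _ => heq P]
      apply sum_eval_zero F
      refine lt_of_le_of_lt (totalDegree_mul _ _) ?_
      have h0 : (map (algebraMap F E) f).totalDegree ≤ f.totalDegree :=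
        tdeg_map_le _ _
      have h1 : (map (algebraMap F E) f).totalDegree ≤ ν := le_trans h0 hf
      have he1 : m * (Fintype.card F - 1) = m * (q - 1) := rfl
      have he2 : ((Fintype.card F).digits e).sum = (q.digits e).sum := rfl
      omega
    rw [← Equiv.sum_comp φ.toEquiv (fun a => h a * a ^ e)]
    simpa using key
  obtain ⟨g, hgdeg, hgeval⟩ := interp h d hd2 (by omega) hsum
  refine ⟨g, by rw [hNE] at hgdeg; exact hgdeg, ?_⟩
  intro P
  rw [hgeval (φ P), hh]
  simp only [LinearEquiv.symm_apply_apply]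
end

section
/- Let q be a prime power and 0 ≤ ν ≤ q-2. Then there exists a vector c ∈ F_q^{q^2}, indexed by the points of F_{q^2}, of weight exactly (ν+1)q such that Σ_{P ∈ F_{q^2}} c_P · Tr_{F_{q^2}/F_q}(f(P) · g(P)^q) = 0 for all univariate polynomials f, g ∈ F_{q^2}[x] of degree at most ν; that is, the Hermitian puncture code P_h(R_{q^2}(ν,1)) contains a vector of weight (ν+1)q. -/
section PunctureHelpers
open Polynomial Finset

lemma sum_eval_eq_zero' {E : Type*} [Field E] [Fintype E] (F : Polynomial E)
    (h : F.natDegree < Fintype.card E - 1) : ∑ x : E, F.eval x = 0 := by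
  have he : ∀ x : E, F.eval x = ∑ d ∈ Finset.range (F.natDegree + 1), F.coeff d * x ^ d := by
    intro x; rw [Polynomial.eval_eq_sum_range]
  simp_rw [he]
  rw [Finset.sum_comm]
  apply Finset.sum_eq_zero
  intro d hd
  rw [← Finset.mul_sum, FiniteField.sum_pow_lt_card_sub_one E d ?_, mul_zero]
  have := Finset.mem_range.mp hd
  omega

lemma prod_neg' {E : Type*} [CommRing E] {ι : Type*} (s : Finset ι) (f : ι → E) :
    ∏ a ∈ s, (-(f a)) = (-1) ^ s.card * ∏ a ∈ s, f a := by
  calc ∏ a ∈ s, (-(f a)) = ∏ a ∈ s, ((-1) * f a) := Finset.prod_congr rfl (fun a _ => by ring)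
    _ = (∏ _a ∈ s, (-1 : E)) * ∏ a ∈ s, f a := Finset.prod_mul_distrib
    _ = (-1) ^ s.card * ∏ a ∈ s, f a := by rw [Finset.prod_const]


/-- For a prime power `q`, a finite field `E` with `q²` elements, and
`0 ≤ ν ≤ q-2`, there exists a vector `c` indexed by the points of `F_{q²}`, with entries
in `F_q` (fixed by `x ↦ x^q`), of weight exactly `(ν+1)q`, such that
`Σ_P c_P · Tr_{q²/q}(f(P)·g(P)^q) = 0` for all univariate `f, g` over `F_{q²}` of degree
at most `ν`; i.e. the Hermitian puncture code `P_h(R_{q²}(ν,1))` contains a vector of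
weight `(ν+1)q`. -/
theorem puncture_code_weight (q : ℕ) (hq : IsPrimePow q)
    (E : Type*) [Field E] [Fintype E] (hE : Fintype.card E = q ^ 2)
    (ν : ℕ) (hν : ν ≤ q - 2) :
    ∃ c : E → E, (∀ P, (c P) ^ q = c P) ∧ wt c = (ν + 1) * q ∧
      ∀ f g : Polynomial E, f.natDegree ≤ ν → g.natDegree ≤ ν →
        ∑ P : E, c P * (f.eval P * (g.eval P) ^ q + (f.eval P * (g.eval P) ^ q) ^ q) = 0 := by
  classical
  have hq2 : 2 ≤ q := hq.two_le
  have hν2 : ν + 2 ≤ q := by omega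
  obtain ⟨p, k, hp, hk, hpk⟩ := hq
  have hp' : p.Prime := hp.nat_prime
  haveI hfact : Fact p.Prime := ⟨hp'⟩
  -- characteristic
  obtain ⟨n, hrp, hcard⟩ := FiniteField.card E (ringChar E)
  have hpr : p = ringChar E := by
    have h1 : p ∣ (ringChar E) ^ (n : ℕ) := by
      rw [← hcard, hE, ← hpk, ← pow_mul]
      exact dvd_pow_self p (by positivity)
    exact (Nat.prime_dvd_prime_iff_eq hp' hrp).mp (hp'.dvd_of_dvd_pow h1)
  haveI hcharP : CharP E p := hpr ▸ ringChar.charP E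
  -- Frobenius facts
  have frobsub : ∀ x y : E, (x - y) ^ q = x ^ q - y ^ q := by
    intro x y; rw [← hpk]; exact sub_pow_char_pow x y k
  have powcard : ∀ x : E, x ^ (q * q) = x := by
    intro x; rw [← sq, ← hE]; exact FiniteField.pow_card x
  have hLq : ∀ x : E, (x ^ q - x) ^ q = -(x ^ q - x) := by
    intro x
    rw [frobsub, ← pow_mul, powcard]
    ring
  -- counting
  set L : E → E := fun x => x ^ q - x with hL
  have frobadd : ∀ x y : E, (x + y) ^ q = x ^ q + y ^ q := by
    intro x y; rw [← hpk]; exact add_pow_char_pow x y p k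
  have hLadd : ∀ x y : E, L (x + y) = L x + L y := by
    intro x y
    simp only [hL]
    rw [frobadd]
    ring
  set Kfin : Finset E := univ.filter (fun x => x ^ q = x) with hKfin
  have hroots_card : ∀ (φ : E[X]), φ.natDegree = q → φ ≠ 0 →
      ∀ s : Finset E, (∀ x ∈ s, φ.eval x = 0) → s.card ≤ q := by
    intro φ hd h0 s hs
    have hsub : s ⊆ φ.roots.toFinset := by
      intro x hx
      rw [Multiset.mem_toFinset, mem_roots h0]
      exact hs x hx
    calc s.card ≤ φ.roots.toFinset.card := Finset.card_le_card hsub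
      _ ≤ Multiset.card φ.roots := Multiset.toFinset_card_le _
      _ ≤ φ.natDegree := φ.card_roots'
      _ = q := hd
  have hXq : ((X : E[X]) ^ q - X).natDegree = q := by
    rw [natDegree_sub_eq_left_of_natDegree_lt, natDegree_X_pow]
    rw [natDegree_X_pow, natDegree_X]; omega
  have hXq' : ((X : E[X]) ^ q + X).natDegree = q := by
    rw [natDegree_add_eq_left_of_natDegree_lt, natDegree_X_pow]
    rw [natDegree_X_pow, natDegree_X]; omega
  have hKle : Kfin.card ≤ q := by
    apply hroots_card _ hXq
    · intro h; rw [h] at hXq; simp at hXq; omega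
    · intro x hx
      simp only [hKfin, mem_filter] at hx
      simp [hx.2]
  set Im : Finset E := univ.image L with hIm
  have hImq : ∀ a ∈ Im, a ^ q = -a := by
    intro a ha
    obtain ⟨x, -, hx⟩ := Finset.mem_image.mp ha
    rw [← hx]; exact hLq x
  have hImle : Im.card ≤ q := by
    apply hroots_card ((X : E[X]) ^ q + X) hXq'
    · intro h; rw [h] at hXq'; simp at hXq'; omega
    · intro a ha
      simp [hImq a ha]
  -- fibers
  have hfiber : ∀ a ∈ Im, (univ.filter (fun x => L x = a)).card = Kfin.card := by
    intro a ha
    obtain ⟨x0, -, hx0⟩ := Finset.mem_image.mp ha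
    simp only [hL] at hx0
    have himg : univ.filter (fun x => L x = a) = Kfin.image (fun t => x0 + t) := by
      ext y
      simp only [mem_filter, mem_univ, true_and, Finset.mem_image, hKfin, hL]
      constructor
      · intro hy
        refine ⟨y - x0, ?_, by ring⟩
        rw [frobsub]
        linear_combination hy - hx0
      · rintro ⟨t, ht, rfl⟩
        rw [frobadd]
        linear_combination hx0 + ht
    rw [himg, Finset.card_image_of_injective _ (add_right_injective x0)]
  have htotal : q * q = Im.card * Kfin.card := by
    have h1 := Finset.card_eq_sum_card_fiberwise
      (f := L) (s := (univ : Finset E)) (t := Im)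
      (fun x _ => Finset.mem_image_of_mem L (mem_univ x))
    rw [Finset.card_univ, hE, sq] at h1
    rw [h1, Finset.sum_congr rfl hfiber, Finset.sum_const, smul_eq_mul]
  have hKeq : Kfin.card = q := by
    have h2 : q * q ≤ q * Kfin.card := by
      calc q * q = Im.card * Kfin.card := htotal
        _ ≤ q * Kfin.card := Nat.mul_le_mul_right _ hImle
    have := Nat.le_of_mul_le_mul_left h2 (by omega)
    omega
  have hImeq : Im.card = q := by
    rw [hKeq] at htotal
    exact Nat.eq_of_mul_eq_mul_right (by omega) htotal.symm
  -- choose A and β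
  set m : ℕ := q - 1 - ν with hm
  obtain ⟨A, hAsub, hAcard⟩ := Finset.exists_subset_card_eq (s := Im) (n := m) (by omega)
  have hAq : ∀ a ∈ A, a ^ q = -a := fun a ha => hImq a (hAsub ha)
  obtain ⟨x0, hx0⟩ : ∃ x : E, x ∉ Kfin := by
    by_contra h
    push_neg at h
    have : (univ : Finset E).card ≤ Kfin.card :=
      Finset.card_le_card (fun x _ => h x)
    rw [Finset.card_univ, hE, sq] at this
    nlinarith
  have hβ0 : L x0 ≠ 0 := by
    intro h
    apply hx0
    simp only [hL, sub_eq_zero] at h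
    simp [hKfin, h]
  set β : E := L x0 with hβ
  have hβq : β ^ q = -β := hLq x0
  set b : E := β ^ m with hb
  have hb0 : b ≠ 0 := pow_ne_zero _ hβ0
  have hbq : b ^ q = (-1) ^ m * b := by
    rw [hb, ← pow_mul, mul_comm m q, pow_mul, hβq, neg_pow]
  -- the codeword
  set c : E → E := fun P => b * ∏ a ∈ A, (P ^ q - P - a) with hc
  set hpoly : E[X] := C b * ∏ a ∈ A, ((X : E[X]) ^ q - X - C a) with hhp
  have hc_eval : ∀ P : E, hpoly.eval P = c P := by
    intro P
    simp [hhp, hc, eval_prod]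
  -- claim 1
  have hcq : ∀ P : E, (c P) ^ q = c P := by
    intro P
    have hfac : ∀ a ∈ A, (P ^ q - P - a) ^ q = -(P ^ q - P - a) := by
      intro a ha
      rw [frobsub, hLq, hAq a ha]
      ring
    rw [hc]
    rw [mul_pow, hbq]
    rw [← Finset.prod_pow, Finset.prod_congr rfl hfac, prod_neg', hAcard]
    have hone : ((-1 : E) ^ m) * ((-1 : E) ^ m) = 1 := by
      rw [← pow_add, ← two_mul, pow_mul, neg_one_sq, one_pow]
    calc (-1 : E) ^ m * b * ((-1) ^ m * ∏ a ∈ A, (P ^ q - P - a))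
        = ((-1 : E) ^ m * (-1) ^ m) * (b * ∏ a ∈ A, (P ^ q - P - a)) := by ring
      _ = b * ∏ a ∈ A, (P ^ q - P - a) := by rw [hone, one_mul]
  -- weight
  have hwt : wt c = (ν + 1) * q := by
    have hsupp : univ.filter (fun P => c P ≠ 0) = univ.filter (fun P => L P ∉ A) := by
      ext P
      simp only [mem_filter, mem_univ, true_and, hc, hL]
      rw [mul_ne_zero_iff]
      constructor
      · rintro ⟨-, hprod⟩ hmem
        rw [Finset.prod_ne_zero_iff] at hprod
        exact hprod _ hmem (by ring_nf)
      · intro hmem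
        refine ⟨hb0, Finset.prod_ne_zero_iff.mpr fun a ha h0 => hmem ?_⟩
        have : P ^ q - P = a := by linear_combination h0
        rwa [this]
    have hinA : (univ.filter (fun P => L P ∈ A)).card = m * q := by
      have h1 := Finset.card_eq_sum_card_fiberwise
        (f := L) (s := univ.filter (fun P => L P ∈ A)) (t := A)
        (fun x hx => (mem_filter.mp hx).2)
      rw [h1]
      have h2 : ∀ a ∈ A, ((univ.filter (fun P => L P ∈ A)).filter (fun x => L x = a)).card = q := by
        intro a ha
        have : (univ.filter (fun P => L P ∈ A)).filter (fun x => L x = a)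
            = univ.filter (fun x => L x = a) := by
          rw [Finset.filter_filter]
          apply Finset.filter_congr
          intro x _
          constructor
          · rintro ⟨-, h⟩; exact h
          · intro h; exact ⟨by rw [h]; exact ha, h⟩
        rw [this, hfiber a (hAsub ha), hKeq]
      rw [Finset.sum_congr rfl h2, Finset.sum_const, smul_eq_mul, hAcard]
    have hcompl := Finset.card_filter_add_card_filter_not
      (s := (univ : Finset E)) (p := fun P => L P ∈ A)
    rw [Finset.card_univ, hE, hinA] at hcompl
    have hmsum : m * q + (ν + 1) * q = q ^ 2 := by
      rw [← add_mul, sq]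
      congr 1
      omega
    have hcard2 : (univ.filter (fun P => L P ∉ A)).card = (ν + 1) * q := by omega
    rw [wt, Nat.card_eq_fintype_card, Fintype.card_subtype, hsupp, hcard2]
  refine ⟨c, hcq, hwt, ?_⟩
  -- the sum condition
  intro f g hf hg
  have hqq : q ≠ 0 := by omega
  have hS : ∑ P : E, c P * (f.eval P * (g.eval P) ^ q) = 0 := by
    have heval : ∀ P : E, c P * (f.eval P * (g.eval P) ^ q)
        = (hpoly * (f * g ^ q)).eval P := by
      intro P
      simp only [eval_mul, eval_pow]
      rw [hc_eval]
    simp_rw [heval]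
    apply sum_eval_eq_zero'
    rw [hE]
    have hd1 : hpoly.natDegree ≤ m * q := by
      calc hpoly.natDegree ≤ (C b).natDegree + (∏ a ∈ A, ((X : E[X]) ^ q - X - C a)).natDegree :=
            natDegree_mul_le
        _ ≤ 0 + ∑ a ∈ A, ((X : E[X]) ^ q - X - C a).natDegree := by
            gcongr
            · exact le_of_eq (natDegree_C b)
            · exact natDegree_prod_le _ _
        _ ≤ 0 + ∑ a ∈ A, q := by
            gcongr with a ha
            calc ((X : E[X]) ^ q - X - C a).natDegree
                ≤ max (((X : E[X]) ^ q - X).natDegree) ((C a).natDegree) := natDegree_sub_le _ _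
              _ ≤ q := by rw [hXq, natDegree_C]; omega
        _ = m * q := by rw [Finset.sum_const, smul_eq_mul, hAcard, zero_add]
    have hd2 : (f * g ^ q).natDegree ≤ ν + ν * q := by
      calc (f * g ^ q).natDegree ≤ f.natDegree + (g ^ q).natDegree := natDegree_mul_le
        _ ≤ ν + q * g.natDegree := by
            gcongr
            exact natDegree_pow_le
        _ ≤ ν + q * ν := by gcongr
        _ = ν + ν * q := by ring
    have hd : (hpoly * (f * g ^ q)).natDegree ≤ m * q + (ν + ν * q) :=
      le_trans natDegree_mul_le (by gcongr)
    have harith : m * q + (ν + ν * q) + 2 ≤ q ^ 2 := by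
      obtain ⟨t, ht⟩ : ∃ t, q = ν + 2 + t := ⟨q - ν - 2, by omega⟩
      have hmt : m = t + 1 := by omega
      rw [hmt, ht]
      calc (t + 1) * (ν + 2 + t) + (ν + ν * (ν + 2 + t)) + 2
          = (t + 1 + ν) * (ν + 2 + t) + (ν + 2) := by ring
        _ ≤ (t + 1 + ν) * (ν + 2 + t) + (ν + 2 + t) := by omega
        _ = (ν + 2 + t) ^ 2 := by ring
    omega
  -- Frobenius of a sum
  have hφsum : ∀ z : E → E, (∑ P : E, z P) ^ q = ∑ P : E, (z P) ^ q := by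
    intro z
    have h := map_sum (iterateFrobenius E p k) z univ
    simp only [iterateFrobenius_def] at h
    rw [← hpk]
    exact h
  have hterm : ∀ P : E, c P * (f.eval P * (g.eval P) ^ q + (f.eval P * (g.eval P) ^ q) ^ q)
      = c P * (f.eval P * (g.eval P) ^ q) + (c P * (f.eval P * (g.eval P) ^ q)) ^ q := by
    intro P
    linear_combination (-((f.eval P * (g.eval P) ^ q) ^ q)) * hcq P
  simp_rw [hterm]
  rw [Finset.sum_add_distrib, hS, ← hφsum, hS, zero_pow hqq, add_zero]

end PunctureHelpers
end

section
/- Let q be a prime power and 0 ≤ ν ≤ q-2. Then there exists a univariate polynomial g ∈ F_{q^2}[x] of degree at most q^2 - (ν+1)q such that g(P) ∈ F_q for all P ∈ F_{q^2} and the evaluation vector (g(P))_{P ∈ F_{q^2}} has weight exactly (ν+1)q; that is, the subfield subcode R_{q^2}(q^2-(ν+1)q, 1)|_{F_q} contains a vector of weight (ν+1)q. -/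
open Polynomial Finset in
lemma aux_card_roots {E : Type*} [Field E] [Fintype E] [DecidableEq E]
    (f : Polynomial E) (hf : f ≠ 0) :
    (Finset.univ.filter fun x => f.eval x = 0).card ≤ f.natDegree := by
  have hsub : (Finset.univ.filter fun x => f.eval x = 0) ⊆ f.roots.toFinset := by
    intro x hx
    simp only [Finset.mem_filter] at hx
    simp [Multiset.mem_toFinset, mem_roots, hf, hx.2, IsRoot]
  calc (Finset.univ.filter fun x => f.eval x = 0).card
      ≤ f.roots.toFinset.card := Finset.card_le_card hsub
    _ ≤ Multiset.card f.roots := Multiset.toFinset_card_le _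
    _ ≤ f.natDegree := f.card_roots'

open Polynomial in
lemma aux_deg {E : Type*} [Field E] {q : ℕ} (hq2 : 2 ≤ q) (d c : E) :
    (X ^ q + C d * X + C c : Polynomial E).natDegree = q ∧
      (X ^ q + C d * X + C c : Polynomial E) ≠ 0 := by
  have hco : (X ^ q + C d * X + C c : Polynomial E).coeff q = 1 := by
    rw [coeff_add, coeff_add, coeff_X_pow, coeff_C, coeff_C_mul, coeff_X]
    have h1 : ¬ (1 = q) := by omega
    have h0 : ¬ (q = 0) := by omega
    simp [h1, h0]
  have hne : (X ^ q + C d * X + C c : Polynomial E) ≠ 0 := by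
    intro h; rw [h] at hco; simp at hco
  have hle : (X ^ q + C d * X + C c : Polynomial E).natDegree ≤ q := by
    refine le_trans (natDegree_add_le _ _) ?_
    refine max_le (le_trans (natDegree_add_le _ _) ?_) (by simp)
    refine max_le (by simp) ?_
    refine le_trans (natDegree_C_mul_le _ _) ?_
    simp only [natDegree_X]
    omega
  have hge : q ≤ (X ^ q + C d * X + C c : Polynomial E).natDegree :=
    le_natDegree_of_ne_zero (by rw [hco]; exact one_ne_zero)
  exact ⟨le_antisymm hle hge, hne⟩

open Polynomial Finset in
/-- For a prime power `q`, a finite field `E` with `q²` elements, and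
`0 ≤ ν ≤ q-2`, there exists a univariate polynomial `g` over `F_{q²}` of degree at most
`q² - (ν+1)q` all of whose values lie in `F_q` (i.e. are fixed by `x ↦ x^q`) whose
evaluation vector has weight exactly `(ν+1)q`; i.e. the subfield subcode
`R_{q²}(q²-(ν+1)q, 1)|_{F_q}` contains a vector of weight `(ν+1)q`. -/
theorem subfield_subcode_weight (q : ℕ) (hq : IsPrimePow q)
    (E : Type*) [Field E] [Fintype E] (hE : Fintype.card E = q ^ 2)
    (ν : ℕ) (hν : ν ≤ q - 2) :
    ∃ g : Polynomial E, g.natDegree ≤ q ^ 2 - (ν + 1) * q ∧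
      (∀ P : E, (g.eval P) ^ q = g.eval P) ∧
      wt (fun P : E => g.eval P) = (ν + 1) * q := by
  classical
  have hq2 : 2 ≤ q := hq.two_le
  obtain ⟨p, n, hpp, hn, hpn⟩ := hq
  have hp : p.Prime := hpp.nat_prime
  haveI : Fact p.Prime := ⟨hp⟩
  haveI hpr : CharP E p := by
    obtain ⟨k, hr, hk⟩ := FiniteField.card E (ringChar E)
    have h1 : p ∣ ringChar E ^ (k : ℕ) := by
      rw [← hk, hE, ← hpn, ← pow_mul]
      exact dvd_pow_self p (by positivity)
    have h2 : p = ringChar E :=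
      (Nat.prime_dvd_prime_iff_eq hp hr).mp (hp.dvd_of_dvd_pow h1)
    rw [h2]; exact ringChar.charP E
  set t : E → E := fun x => x ^ q + x with ht
  have hfrob_add : ∀ x y : E, (x + y) ^ q = x ^ q + y ^ q := by
    intro x y; rw [← hpn]; exact add_pow_char_pow x y p n
  have hfrob_sub : ∀ x y : E, (x - y) ^ q = x ^ q - y ^ q := by
    intro x y; rw [← hpn]; exact sub_pow_char_pow x y n
  have hsq : ∀ x : E, (x ^ q) ^ q = x := by
    intro x; rw [← pow_mul, ← pow_two q, ← hE]; exact FiniteField.pow_card x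
  have htq : ∀ x : E, t x ^ q = t x := by
    intro x
    simp only [ht]
    rw [hfrob_add, hsq, add_comm]
  set Fq : Finset E := Finset.univ.filter (fun x => x ^ q = x) with hFq
  have hFq_le : Fq.card ≤ q := by
    have h := aux_card_roots (X ^ q + C (-1 : E) * X + C 0) (aux_deg hq2 (-1) 0).2
    rw [(aux_deg hq2 (-1 : E) 0).1] at h
    refine le_trans (le_of_eq ?_) h
    rw [hFq]
    congr 1
    ext x
    simp only [Finset.mem_filter, Finset.mem_univ, true_and, eval_add, eval_mul, eval_C,
      eval_X, eval_pow]
    constructor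
    · intro hx; linear_combination hx
    · intro hx; linear_combination hx
  set fib : E → Finset E := fun c => Finset.univ.filter (fun x => t x = c) with hfibdef
  have hfib_le : ∀ c : E, (fib c).card ≤ q := by
    intro c
    have h := aux_card_roots (X ^ q + C (1 : E) * X + C (-c)) (aux_deg hq2 1 (-c)).2
    rw [(aux_deg hq2 (1 : E) (-c)).1] at h
    refine le_trans (le_of_eq ?_) h
    rw [hfibdef]
    congr 1
    ext x
    simp only [ht, Finset.mem_filter, Finset.mem_univ, true_and, eval_add, eval_mul, eval_C,
      eval_X, eval_pow]
    constructor
    · intro hx; linear_combination hx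
    · intro hx; linear_combination hx
  set I : Finset E := Finset.univ.image t with hI
  have hIsub : I ⊆ Fq := by
    intro c hc
    simp only [hI, Finset.mem_image] at hc
    obtain ⟨x, _, rfl⟩ := hc
    simp [hFq, htq x]
  have hsum : q ^ 2 = ∑ c ∈ I, (fib c).card := by
    rw [← hE, ← Finset.card_univ]
    exact Finset.card_eq_sum_card_fiberwise
      (fun x _ => Finset.mem_image_of_mem t (Finset.mem_univ x))
  have hI_le : I.card ≤ q := le_trans (Finset.card_le_card hIsub) hFq_le
  have hsum_le : ∑ c ∈ I, (fib c).card ≤ I.card * q := by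
    calc ∑ c ∈ I, (fib c).card ≤ ∑ _c ∈ I, q := Finset.sum_le_sum (fun c _ => hfib_le c)
      _ = I.card * q := by rw [Finset.sum_const, smul_eq_mul]
  have hIcard : I.card = q := by
    have h1 : q * q ≤ I.card * q := by
      calc q * q = q ^ 2 := (sq q).symm
        _ = ∑ c ∈ I, (fib c).card := hsum
        _ ≤ I.card * q := hsum_le
    have hq0 : 0 < q := by omega
    have := Nat.le_of_mul_le_mul_right h1 hq0
    omega
  have hIFq : I = Fq :=
    Finset.eq_of_subset_of_card_le hIsub (by rw [hIcard]; exact hFq_le)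
  have hfib_eq : ∀ c ∈ I, (fib c).card = q := by
    have hsum_eq : ∑ c ∈ I, (fib c).card = ∑ _c ∈ I, q := by
      rw [Finset.sum_const, smul_eq_mul, hIcard, ← sq, ← hsum]
    exact fun c hc =>
      (Finset.sum_eq_sum_iff_of_le (fun c _ => hfib_le c)).mp hsum_eq c hc
  have hks : ν + 1 ≤ q := by omega
  obtain ⟨A, hA_sub, hA_card⟩ :=
    Finset.exists_subset_card_eq (s := Fq) (n := ν + 1) (by rw [← hIFq, hIcard]; exact hks)
  set B : Finset E := Fq \ A with hB
  have hB_card : B.card = q - (ν + 1) := by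
    rw [hB, Finset.card_sdiff_of_subset hA_sub, hA_card, ← hIFq, hIcard]
  set g : Polynomial E := ∏ c ∈ B, (X ^ q + C (1 : E) * X + C (-c)) with hg
  have heval : ∀ P : E, g.eval P = ∏ c ∈ B, (t P - c) := by
    intro P
    rw [hg, eval_prod]
    refine Finset.prod_congr rfl (fun c _ => ?_)
    simp only [ht, eval_add, eval_mul, eval_C, eval_X, eval_pow]
    ring
  refine ⟨g, ?_, ?_, ?_⟩
  · calc g.natDegree ≤ ∑ c ∈ B, (X ^ q + C (1 : E) * X + C (-c)).natDegree :=
        natDegree_prod_le _ _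
      _ = ∑ _c ∈ B, q := Finset.sum_congr rfl (fun c _ => (aux_deg hq2 (1 : E) (-c)).1)
      _ = B.card * q := by rw [Finset.sum_const, smul_eq_mul]
      _ = q ^ 2 - (ν + 1) * q := by rw [hB_card, Nat.sub_mul, sq]
  · intro P
    rw [heval, ← Finset.prod_pow]
    refine Finset.prod_congr rfl (fun c hc => ?_)
    have hcq : c ^ q = c := by
      have : c ∈ Fq := (Finset.sdiff_subset : B ⊆ Fq) hc
      simpa [hFq] using this
    rw [hfrob_sub, htq, hcq]
  · have hwt : wt (fun P : E => g.eval P) =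
        (Finset.univ.filter fun P : E => g.eval P ≠ 0).card := by
      rw [wt, Nat.card_eq_fintype_card, Fintype.card_subtype]
    rw [hwt]
    have hset : (Finset.univ.filter fun P : E => g.eval P ≠ 0) =
        Finset.univ.filter (fun P : E => t P ∈ A) := by
      ext P
      simp only [Finset.mem_filter, Finset.mem_univ, true_and]
      rw [heval, Finset.prod_ne_zero_iff]
      constructor
      · intro h
        have htP : t P ∈ Fq := hIFq ▸ Finset.mem_image_of_mem t (Finset.mem_univ P)
        by_contra hA'
        exact h _ (Finset.mem_sdiff.mpr ⟨htP, hA'⟩) (sub_self _)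
      · intro hA' c hc h0
        rw [sub_eq_zero] at h0
        rw [← h0] at hc
        exact (Finset.mem_sdiff.mp hc).2 hA'
    rw [hset]
    rw [Finset.card_eq_sum_card_fiberwise
      (s := Finset.univ.filter (fun P : E => t P ∈ A)) (f := t) (t := A) (fun x hx => (Finset.mem_filter.mp hx).2)]
    have hcong : ∀ c ∈ A,
        ((Finset.univ.filter (fun P : E => t P ∈ A)).filter (fun P => t P = c)) = fib c := by
      intro c hc
      ext x
      simp only [hfibdef, Finset.mem_filter, Finset.mem_univ, true_and]
      constructor
      · exact fun h => h.2
      · intro h; exact ⟨h ▸ hc, h⟩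
    rw [Finset.sum_congr rfl
      (fun c hc => by rw [hcong c hc, hfib_eq c (hIFq ▸ hA_sub hc)])]
    rw [Finset.sum_const, smul_eq_mul, hA_card]
end
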